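/- arXiv:1611.07345 — 9 statements merged into one kernel-verified Lean document; each statement's English description precedes it below -/
import Mathlib

section
/- Let S : P̃ × X → ℝ be a proper scoring rule on a class P̃ of probability densities that contains the renormalized density p_w for every p ∈ P and w ∈ W, and suppose S(p,x) = S(h,x) for μ-a.e. x whenever p = h μ-a.e. Define the weighted score Ŝ(p,x;w) = w(x)·S(p_w, x). Then: (i) Ŝ is localizing, i.e. whenever p, h ∈ P satisfy p = h μ-a.e. on {w > 0}, one has Ŝ(p,x;w) = Ŝ(h,x;w) for μ-a.e. x ∈ X; and (ii) Ŝ(·,·;w) is proper for each w ∈ W, i.e. ∫_X Ŝ(p,x;w)·q(x) dμ(x) ≥ ∫_X Ŝ(q,x;w)·q(x) dμ(x) for all p, q ∈ P. (A key identity is ∫_X Ŝ(p,x;w)·q(x) dμ(x) = (∫qw)·∫_X S(p_w,x)·q_w(x) dμ(x).) -/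
open MeasureTheory
open scoped ENNReal

noncomputable section

/-- The quasi-integral of a real-valued function, with values in the extended reals:
positive part minus negative part (each computed as a lower Lebesgue integral). -/
def eint {X : Type*} [MeasurableSpace X] (μ : Measure X) (f : X → ℝ) : EReal :=
  ((∫⁻ x, ENNReal.ofReal (f x) ∂μ : ℝ≥0∞) : EReal)
    - ((∫⁻ x, ENNReal.ofReal (-f x) ∂μ : ℝ≥0∞) : EReal)

/-- A probability density with respect to `μ`. -/
def IsDensity {X : Type*} [MeasurableSpace X] (μ : Measure X) (p : X → ℝ) : Prop :=
  Measurable p ∧ (∀ x, 0 ≤ p x) ∧ ∫ x, p x ∂μ = 1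

/-- A weight function: measurable with values in `[0,1]`. -/
def IsWeight {X : Type*} [MeasurableSpace X] (w : X → ℝ) : Prop :=
  Measurable w ∧ ∀ x, w x ∈ Set.Icc (0 : ℝ) 1

/-- The renormalized density `p_w(x) = w(x)·p(x) / ∫ p·w dμ`. -/
def renorm {X : Type*} [MeasurableSpace X] (μ : Measure X) (p w : X → ℝ) : X → ℝ :=
  fun x => w x * p x / ∫ y, p y * w y ∂μ

/-- Multiplication by a positive real constant distributes over subtraction of
(coercions of) extended nonnegative reals in `EReal`. -/
lemma ereal_mul_sub_ennreal {c : ℝ} (hc : 0 < c) (A B : ℝ≥0∞) :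
    (c : EReal) * ((A : EReal) - (B : EReal)) = (c : EReal) * A - (c : EReal) * B := by
  induction A using ENNReal.recTopCoe with
  | top =>
    induction B using ENNReal.recTopCoe with
    | top =>
      simp only [EReal.coe_ennreal_top, EReal.sub_top, EReal.coe_mul_bot_of_pos hc,
        EReal.coe_mul_top_of_pos hc]
    | coe b =>
      rw [EReal.coe_ennreal_top, EReal.coe_nnreal_eq_coe_real, EReal.top_sub_coe,
        EReal.coe_mul_top_of_pos hc, ← EReal.coe_mul, EReal.top_sub_coe]
  | coe a =>
    induction B using ENNReal.recTopCoe with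
    | top =>
      rw [EReal.coe_ennreal_top, EReal.sub_top, EReal.coe_mul_bot_of_pos hc,
        EReal.coe_nnreal_eq_coe_real, ← EReal.coe_mul, EReal.coe_mul_top_of_pos hc,
        EReal.sub_top]
    | coe b =>
      rw [EReal.coe_nnreal_eq_coe_real, EReal.coe_nnreal_eq_coe_real, ← EReal.coe_sub,
        ← EReal.coe_mul, ← EReal.coe_mul, ← EReal.coe_mul, ← EReal.coe_sub]
      norm_cast
      ring

/-- Multiplication by a nonnegative real constant is monotone on `EReal`. -/
lemma ereal_mul_le_mul_left {c : ℝ} (hc : 0 < c) {a b : EReal} (h : a ≤ b) :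
    (c : EReal) * a ≤ (c : EReal) * b := by
  induction a using EReal.rec with
  | bot => rw [EReal.coe_mul_bot_of_pos hc]; exact bot_le
  | coe a =>
    induction b using EReal.rec with
    | bot => exact absurd h (by simp)
    | coe b =>
      rw [← EReal.coe_mul, ← EReal.coe_mul]
      exact_mod_cast mul_le_mul_of_nonneg_left (by exact_mod_cast h) hc.le
    | top => rw [EReal.coe_mul_top_of_pos hc]; exact le_top
  | top =>
    rw [top_le_iff] at h
    rw [h]

/-- `eint` commutes with multiplication by a positive constant. -/
lemma eint_const_mul {X : Type*} [MeasurableSpace X] (μ : Measure X) {c : ℝ} (hc : 0 < c)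
    (f : X → ℝ) : eint μ (fun x => c * f x) = (c : EReal) * eint μ f := by
  unfold eint
  have h1 : ∀ x, ENNReal.ofReal (c * f x) = ENNReal.ofReal c * ENNReal.ofReal (f x) :=
    fun x => ENNReal.ofReal_mul hc.le
  have h2 : ∀ x, ENNReal.ofReal (-(c * f x)) = ENNReal.ofReal c * ENNReal.ofReal (-f x) := by
    intro x
    rw [← ENNReal.ofReal_mul hc.le, mul_neg]
  simp only [h1, h2]
  rw [lintegral_const_mul' _ _ ENNReal.ofReal_ne_top,
    lintegral_const_mul' _ _ ENNReal.ofReal_ne_top,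
    EReal.coe_ennreal_mul, EReal.coe_ennreal_mul, EReal.coe_ennreal_ofReal,
    max_eq_left hc.le, ← ereal_mul_sub_ennreal hc]

/-- If `S` is a proper scoring rule on a class `Pt` of densities containing
all renormalized densities `p_w` for `p ∈ P`, `w ∈ W`, and `S` respects a.e. equality of
densities, then `Ŝ(p,x;w) = w(x)·S(p_w,x)` is (i) localizing and (ii) proper for each `w ∈ W`;
moreover the key identity
`∫ Ŝ(p,x;w)·q(x) dμ = (∫ q·w dμ) · ∫ S(p_w,x)·q_w(x) dμ` holds. -/
theorem weighted_score_localizing_proper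
    {X : Type*} [MeasurableSpace X] (μ : Measure X) [SigmaFinite μ]
    (P Pt W : Set (X → ℝ)) (S : (X → ℝ) → X → ℝ)
    (hP : ∀ p ∈ P, IsDensity μ p)
    (hPt : ∀ p ∈ Pt, IsDensity μ p)
    (hW : ∀ w ∈ W, IsWeight w)
    (hpos : ∀ p ∈ P, ∀ w ∈ W, 0 < ∫ x, p x * w x ∂μ)
    (hmem : ∀ p ∈ P, ∀ w ∈ W, renorm μ p w ∈ Pt)
    -- `S` is a proper scoring rule on `Pt`: quasi-integrability with `S(p,q) > -∞`,
    -- `S(q,q) ∈ ℝ`, and `S(p,q) ≥ S(q,q)`: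
    (hproper : ∀ p ∈ Pt, ∀ q ∈ Pt,
      (⊥ : EReal) < eint μ (fun x => S p x * q x) ∧
      (∃ r : ℝ, eint μ (fun x => S q x * q x) = (r : EReal)) ∧
      eint μ (fun x => S q x * q x) ≤ eint μ (fun x => S p x * q x))
    -- `S(p,x) = S(h,x)` for μ-a.e. `x` whenever `p = h` μ-a.e.:
    (hae : ∀ p ∈ Pt, ∀ h ∈ Pt, p =ᵐ[μ] h → (fun x => S p x) =ᵐ[μ] fun x => S h x) :
    -- (i) `Ŝ` is localizing:
    (∀ p ∈ P, ∀ h ∈ P, ∀ w ∈ W,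
      (∀ᵐ x ∂μ, 0 < w x → p x = h x) →
      ∀ᵐ x ∂μ, w x * S (renorm μ p w) x = w x * S (renorm μ h w) x) ∧
    -- (ii) `Ŝ(·,·;w)` is proper for each `w ∈ W`:
    (∀ p ∈ P, ∀ q ∈ P, ∀ w ∈ W,
      eint μ (fun x => w x * S (renorm μ q w) x * q x)
        ≤ eint μ (fun x => w x * S (renorm μ p w) x * q x)) ∧
    -- key identity:
    (∀ p ∈ P, ∀ q ∈ P, ∀ w ∈ W,
      eint μ (fun x => w x * S (renorm μ p w) x * q x)
        = ((∫ x, q x * w x ∂μ : ℝ) : EReal)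
            * eint μ (fun x => S (renorm μ p w) x * renorm μ q w x)) := by
  -- the key identity
  have key : ∀ p ∈ P, ∀ q ∈ P, ∀ w ∈ W,
      eint μ (fun x => w x * S (renorm μ p w) x * q x)
        = ((∫ x, q x * w x ∂μ : ℝ) : EReal)
            * eint μ (fun x => S (renorm μ p w) x * renorm μ q w x) := by
    intro p hp q hq w hw
    have hc : 0 < ∫ x, q x * w x ∂μ := hpos q hq w hw
    have hfun : (fun x => w x * S (renorm μ p w) x * q x)
        = fun x => (∫ x, q x * w x ∂μ) * (S (renorm μ p w) x * renorm μ q w x) := by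
      funext x
      unfold renorm
      field_simp
    rw [hfun, eint_const_mul μ hc]
  refine ⟨?_, ?_, key⟩
  · -- localizing
    intro p hp h hh w hw hph
    have hwp : (fun x => w x * p x) =ᵐ[μ] fun x => w x * h x := by
      filter_upwards [hph] with x hx
      rcases eq_or_lt_of_le ((hW w hw).2 x).1 with h0 | h0
      · rw [← h0, zero_mul, zero_mul]
      · rw [hx h0]
    have hint : ∫ y, p y * w y ∂μ = ∫ y, h y * w y ∂μ := by
      apply integral_congr_ae
      filter_upwards [hwp] with x hx
      rw [mul_comm, hx, mul_comm]
    have hren : renorm μ p w =ᵐ[μ] renorm μ h w := by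
      filter_upwards [hwp] with x hx
      unfold renorm
      rw [hx, hint]
    have hS := hae (renorm μ p w) (hmem p hp w hw) (renorm μ h w) (hmem h hh w hw) hren
    filter_upwards [hS] with x hx
    rw [hx]
  · -- propriety
    intro p hp q hq w hw
    have hc : 0 < ∫ x, q x * w x ∂μ := hpos q hq w hw
    rw [key p hp q hq w hw, key q hq q hq w hw]
    exact ereal_mul_le_mul_left hc
      (hproper (renorm μ p w) (hmem p hp w hw) (renorm μ q w) (hmem q hq w hw)).2.2

end
end

section
/- Let s : (0,1) × {0,1} → ℝ be a strictly proper binary scoring rule. For densities p, q and a weight function w with ∫pw, ∫qw ∈ (0,1), define S_s(p,x;w) = w(x)·s(∫pw, 1) + (1−w(x))·s(∫pw, 0). Then: (i) ∫_X S_s(p,x;w)·q(x) dμ(x) − ∫_X S_s(q,x;w)·q(x) dμ(x) = s(∫pw, ∫qw) − s(∫qw, ∫qw) ≥ 0, so S_s(·,·;w) is a proper scoring rule; and (ii) S_s is localizing: if p = h μ-a.e. on {w > 0} (both with ∫pw, ∫hw ∈ (0,1)), then S_s(p,x;w) = S_s(h,x;w) for every x ∈ X. -/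
open MeasureTheory
open scoped ENNReal

noncomputable section

/-- For a binary scoring rule `s : (0,1) × {0,1} → ℝ` (encoded with `Bool`), the expected
score `s(α,β) = β·s(α,1) + (1−β)·s(α,0)`. -/
def sbar (s : ℝ → Bool → ℝ) (α β : ℝ) : ℝ :=
  β * s α true + (1 - β) * s α false

/-- A binary scoring rule is strictly proper if `s(α,β) ≥ s(β,β)` for all `α, β ∈ (0,1)`,
with equality iff `α = β`. -/
def StrictlyProperBinary (s : ℝ → Bool → ℝ) : Prop :=
  ∀ α ∈ Set.Ioo (0 : ℝ) 1, ∀ β ∈ Set.Ioo (0 : ℝ) 1,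
    sbar s β β ≤ sbar s α β ∧ (sbar s α β = sbar s β β ↔ α = β)

/-- The weighted scoring rule `S_s(p,x;w) = w(x)·s(∫pw,1) + (1−w(x))·s(∫pw,0)`. -/
def Sbin {X : Type*} [MeasurableSpace X] (μ : Measure X) (s : ℝ → Bool → ℝ)
    (p w : X → ℝ) (x : X) : ℝ :=
  w x * s (∫ y, p y * w y ∂μ) true + (1 - w x) * s (∫ y, p y * w y ∂μ) false

/-- For a strictly proper binary scoring rule `s`, the weighted rule `S_s`
satisfies (i) `∫ S_s(p,·;w)·q dμ − ∫ S_s(q,·;w)·q dμ = s(∫pw,∫qw) − s(∫qw,∫qw) ≥ 0`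
(so it is proper), and (ii) it is localizing: if `p = h` μ-a.e. on `{w > 0}` then
`S_s(p,x;w) = S_s(h,x;w)` for every `x`. -/
theorem binary_weighted_score_proper_localizing
    {X : Type*} [MeasurableSpace X] (μ : Measure X) [SigmaFinite μ]
    (s : ℝ → Bool → ℝ) (hs : StrictlyProperBinary s)
    (p q w : X → ℝ)
    (hp : IsDensity μ p) (hq : IsDensity μ q) (hw : IsWeight w)
    (hpw : (∫ y, p y * w y ∂μ) ∈ Set.Ioo (0 : ℝ) 1)
    (hqw : (∫ y, q y * w y ∂μ) ∈ Set.Ioo (0 : ℝ) 1) :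
    -- (i)
    ((∫ x, Sbin μ s p w x * q x ∂μ) - ∫ x, Sbin μ s q w x * q x ∂μ
        = sbar s (∫ y, p y * w y ∂μ) (∫ y, q y * w y ∂μ)
          - sbar s (∫ y, q y * w y ∂μ) (∫ y, q y * w y ∂μ) ∧
      0 ≤ (∫ x, Sbin μ s p w x * q x ∂μ) - ∫ x, Sbin μ s q w x * q x ∂μ) ∧
    -- (ii)
    (∀ h : X → ℝ, IsDensity μ h → (∫ y, h y * w y ∂μ) ∈ Set.Ioo (0 : ℝ) 1 →
      (∀ᵐ x ∂μ, 0 < w x → p x = h x) →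
      ∀ x, Sbin μ s p w x = Sbin μ s h w x) := by
  set α := ∫ y, p y * w y ∂μ with hα
  set β := ∫ y, q y * w y ∂μ with hβ
  -- q is integrable
  have hqint : Integrable q μ := by
    by_contra hcon
    have h1 := hq.2.2
    rw [integral_undef hcon] at h1
    exact one_ne_zero h1.symm
  -- q*w is integrable
  have hqwint : Integrable (fun x => q x * w x) μ := by
    refine hqint.mono' ((hq.1.mul hw.1).aestronglyMeasurable) ?_
    filter_upwards with x
    rw [Real.norm_eq_abs, abs_of_nonneg (mul_nonneg (hq.2.1 x) (hw.2 x).1)]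
    calc q x * w x ≤ q x * 1 := mul_le_mul_of_nonneg_left (hw.2 x).2 (hq.2.1 x)
    _ = q x := mul_one _
  -- key computation
  have key : ∀ a b : ℝ, ∫ x, (w x * a + (1 - w x) * b) * q x ∂μ = β * a + (1 - β) * b := by
    intro a b
    have heq : ∀ x, (w x * a + (1 - w x) * b) * q x
        = a * (q x * w x) + b * (q x - q x * w x) := by intro x; ring
    rw [show (fun x => (w x * a + (1 - w x) * b) * q x)
        = fun x => a * (q x * w x) + b * (q x - q x * w x) from funext heq]
    have hsub : Integrable (fun x => q x - q x * w x) μ := hqint.sub hqwint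
    have h1 : Integrable (fun x => a * (q x * w x)) μ := hqwint.const_mul a
    have h2 : Integrable (fun x => b * (q x - q x * w x)) μ := hsub.const_mul b
    rw [integral_add h1 h2, integral_const_mul, integral_const_mul,
      integral_sub hqint hqwint, hq.2.2]
    ring
  have keyS : ∀ γ : ℝ, ∫ x, (w x * s γ true + (1 - w x) * s γ false) * q x ∂μ
      = sbar s γ β := by
    intro γ; rw [key]; rfl
  have hip : ∫ x, Sbin μ s p w x * q x ∂μ = sbar s α β := keyS α
  have hiq : ∫ x, Sbin μ s q w x * q x ∂μ = sbar s β β := keyS β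
  refine ⟨⟨by rw [hip, hiq], ?_⟩, ?_⟩
  · rw [hip, hiq]
    have := (hs α hpw β hqw).1
    linarith
  · intro h hh hhw hph x
    have hint : α = ∫ y, h y * w y ∂μ := by
      apply integral_congr_ae
      filter_upwards [hph] with y hy
      rcases lt_or_eq_of_le (hw.2 y).1 with hpos | hzero
      · rw [hy hpos]
      · rw [← hzero, mul_zero, mul_zero]
    simp only [Sbin, ← hα, ← hint]

end
end

section
/- Let p be a probability density and w a weight function with ∫pw ∈ (0,1) and ∫p(1−w) ∈ (0,1), and suppose p(x) > 0 for every x with w(x) > 0. Then: (i) for all α ∈ (0,1) and z ∈ {0,1}, the logarithmic binary score satisfies s_l(α,z) = s̄(α,z) + s̄(1−α, 1−z); (ii) for every x ∈ X, S^{CSL}(p,x;w) = S^{CL}(p,x;w) + S_{s_l}(p,x;w), where S_{s_l}(p,x;w) = w(x)·s_l(∫pw, 1) + (1−w(x))·s_l(∫pw, 0); and (iii) for every x ∈ X, S^{CSL}(p,x;w) = S^{PWL}(p,x;w) + S_{s̄}(p,x;1−w), where S_{s̄}(p,x;v) = v(x)·s̄(∫pv, 1) + (1−v(x))·s̄(∫pv,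 0). -/
open MeasureTheory
open scoped ENNReal

noncomputable section

/-- The binary scoring rule `s̄(α,z) = −z·(log α + 1) + α`. -/
def sb (α z : ℝ) : ℝ := -z * (Real.log α + 1) + α

/-- The logarithmic binary scoring rule `s_l(α,z) = −z·log α − (1−z)·log(1−α)`. -/
def sl (α z : ℝ) : ℝ := -z * Real.log α - (1 - z) * Real.log (1 - α)

/-- The weighted scoring rule `S_{s̄}(p,x;v) = v(x)·s̄(∫pv,1) + (1−v(x))·s̄(∫pv,0)`. -/
def Ssb {X : Type*} [MeasurableSpace X] (μ : Measure X) (p v : X → ℝ) (x : X) : ℝ :=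
  v x * sb (∫ y, p y * v y ∂μ) 1 + (1 - v x) * sb (∫ y, p y * v y ∂μ) 0

/-- The weighted scoring rule `S_{s_l}(p,x;w) = w(x)·s_l(∫pw,1) + (1−w(x))·s_l(∫pw,0)`. -/
def Ssl {X : Type*} [MeasurableSpace X] (μ : Measure X) (p w : X → ℝ) (x : X) : ℝ :=
  w x * sl (∫ y, p y * w y ∂μ) 1 + (1 - w x) * sl (∫ y, p y * w y ∂μ) 0

/-- The conditional likelihood rule `S^CL(p,x;w) = −w(x)·log p(x) + w(x)·log(∫pw)`. -/
def SCL {X : Type*} [MeasurableSpace X] (μ : Measure X) (p w : X → ℝ) (x : X) : ℝ :=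
  -(w x) * Real.log (p x) + w x * Real.log (∫ y, p y * w y ∂μ)

/-- The penalized weighted likelihood rule
`S^PWL(p,x;w) = −w(x)·log p(x) − w(x) + ∫pw`. -/
def SPWL {X : Type*} [MeasurableSpace X] (μ : Measure X) (p w : X → ℝ) (x : X) : ℝ :=
  -(w x) * Real.log (p x) - w x + ∫ y, p y * w y ∂μ

/-- The censored likelihood rule
`S^CSL(p,x;w) = −w(x)·log p(x) − (1−w(x))·log(1−∫pw)`. -/
def SCSL {X : Type*} [MeasurableSpace X] (μ : Measure X) (p w : X → ℝ) (x : X) : ℝ :=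
  -(w x) * Real.log (p x) - (1 - w x) * Real.log (1 - ∫ y, p y * w y ∂μ)

/-- For a density `p` and weight `w` with `∫pw ∈ (0,1)`,
`∫p(1−w) ∈ (0,1)` and `p > 0` on `{w > 0}`:
(i) `s_l(α,z) = s̄(α,z) + s̄(1−α,1−z)` for `α ∈ (0,1)` and `z ∈ {0,1}`;
(ii) `S^CSL(p,x;w) = S^CL(p,x;w) + S_{s_l}(p,x;w)` for every `x`;
(iii) `S^CSL(p,x;w) = S^PWL(p,x;w) + S_{s̄}(p,x;1−w)` for every `x`. -/
theorem SCSL_decompositions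
    {X : Type*} [MeasurableSpace X] (μ : Measure X) [SigmaFinite μ]
    (p w : X → ℝ) (hp : IsDensity μ p) (hw : IsWeight w)
    (hpw : (∫ y, p y * w y ∂μ) ∈ Set.Ioo (0 : ℝ) 1)
    (hpw' : (∫ y, p y * (1 - w y) ∂μ) ∈ Set.Ioo (0 : ℝ) 1)
    (hppos : ∀ x, 0 < w x → 0 < p x) :
    (∀ α ∈ Set.Ioo (0 : ℝ) 1, ∀ z ∈ ({0, 1} : Set ℝ),
      sl α z = sb α z + sb (1 - α) (1 - z)) ∧
    (∀ x, SCSL μ p w x = SCL μ p w x + Ssl μ p w x) ∧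
    (∀ x, SCSL μ p w x = SPWL μ p w x + Ssb μ p (fun y => 1 - w y) x) := by

  obtain ⟨hpm, hpnn, hpint1⟩ := hp
  obtain ⟨hwm, hwmem⟩ := hw
  -- integrability
  have hpint : Integrable p μ := by
    by_contra h
    rw [integral_undef h] at hpint1
    norm_num at hpint1
  have hpwint : Integrable (fun y => p y * w y) μ := by
    refine hpint.mono ((hpm.mul hwm).aestronglyMeasurable) ?_
    filter_upwards with y
    have h1 := (hwmem y).1
    have h2 := (hwmem y).2
    rw [Real.norm_eq_abs, Real.norm_eq_abs, abs_of_nonneg (mul_nonneg (hpnn y) h1),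
      abs_of_nonneg (hpnn y)]
    nlinarith [hpnn y]
  have key : (∫ y, p y * (1 - w y) ∂μ) = 1 - ∫ y, p y * w y ∂μ := by
    have : (∫ y, p y * (1 - w y) ∂μ) = ∫ y, (p y - p y * w y) ∂μ := by
      congr 1; funext y; ring
    rw [this, integral_sub hpint hpwint, hpint1]
  refine ⟨?_, ?_, ?_⟩
  · intro α hα z hz
    simp only [sl, sb]
    ring
  · intro x
    simp only [SCSL, SCL, Ssl, sl]
    ring
  · intro x
    simp only [SCSL, SPWL, Ssb, sb, key]
    ring


end
end

section
/- Let p, q be probability densities and w a weight function with ∫pw > 0 and ∫qw > 0, such that x ↦ w(x)·q(x)·log q(x) is μ-integrable and x ↦ w(x)·q(x)·log p(x) is quasi-integrable with ∫ w·q·log p dμ < ∞. Then ∫_X S^{CL}(p,x;w)·q(x) dμ(x) − ∫_X S^{CL}(q,x;w)·q(x) dμ(x) ≥ 0 (in the extended reals), with equality if and only if there exists a constant c > 0 with p = c·q μ-a.e. on {w > 0}; moreover the left-hand side equals (∫qw) times the Kullback–Leibler divergence ∫_X q_w·log(q_w/p_w) dμ of the renormalized densities. -/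
open MeasureTheory
open scoped ENNReal

noncomputable section

/-- The extended-real logarithm of a real number: `log r` for `r > 0`, and `−∞`
for `r ≤ 0`. -/
def elog (r : ℝ) : EReal := if r ≤ 0 then ⊥ else ((Real.log r : ℝ) : EReal)

/-- The positive part of an extended real, as an extended nonnegative real. -/
def epos (e : EReal) : ℝ≥0∞ := if e = ⊤ then ⊤ else ENNReal.ofReal e.toReal

/-- The quasi-integral of an extended-real-valued function: positive part minus
negative part (each a lower Lebesgue integral). -/
def eintE {X : Type*} [MeasurableSpace X] (μ : Measure X) (f : X → EReal) : EReal :=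
  ((∫⁻ x, epos (f x) ∂μ : ℝ≥0∞) : EReal) - ((∫⁻ x, epos (-f x) ∂μ : ℝ≥0∞) : EReal)

/-- The conditional likelihood rule `S^CL(p,x;w) = −w(x)·log p(x) + w(x)·log(∫pw)`,
with values in the extended reals (so that `−log p(x) = +∞` when `p(x) = 0`, and
`0·log 0 = 0`). -/
def SCLe {X : Type*} [MeasurableSpace X] (μ : Measure X) (p w : X → ℝ) (x : X) : EReal :=
  -((w x : ℝ) : EReal) * elog (p x) + ((w x : ℝ) : EReal) * elog (∫ y, p y * w y ∂μ)

/-!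
Write `I = ∫ q w`, and `q_w`, `p_w` for the renormalized densities. Pointwise,
`S(p,x;w) q(x) = I · p_w klFun (q_w / p_w) + I (q_w - p_w) + S(q,x;w) q(x)`,
where the first term is nonnegative (and `+∞` exactly where `p_w = 0 < q_w`), while the other
two are integrable and the middle one integrates to `1 - 1 = 0`. Integrating, the expected score
difference is `I ∫ p_w klFun (q_w / p_w)`; by the same splitting of `q_w log (q_w / p_w)` this
integral is the Kullback–Leibler divergence of the renormalized densities. It vanishes iff
`q_w = p_w` a.e. (since `klFun t = 0` only at `t = 1`), that is, iff `p` is proportional to `q`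
on `{w > 0}`.
-/

open InformationTheory

/-- `b · klFun (a / b) = a log (a / b) - a + b`, the Kullback–Leibler integrand of two
unnormalized densities, extended by `∞` where `a > 0 = b`. -/
def klGap (a b : ℝ) : ℝ≥0∞ :=
  if b = 0 ∧ 0 < a then ⊤ else ENNReal.ofReal (b * klFun (a / b))

lemma mul_klFun_div {a b : ℝ} (ha : 0 < a) (hb : 0 < b) :
    b * klFun (a / b) = a * (Real.log a - Real.log b) + b - a := by
  rw [klFun_apply, Real.log_div ha.ne' hb.ne']
  field_simp

lemma klGap_zero_left {b : ℝ} : klGap 0 b = ENNReal.ofReal b := by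
  simp [klGap, klFun_zero]

lemma klGap_zero_right {a : ℝ} (ha : 0 < a) : klGap a 0 = ⊤ := by
  simp [klGap, ha]

lemma coe_klGap_of_pos {a b : ℝ} (ha : 0 < a) (hb : 0 < b) :
    (klGap a b : EReal) = ((a * (Real.log a - Real.log b) + b - a : ℝ) : EReal) := by
  rw [klGap, if_neg fun h => hb.ne' h.1, EReal.coe_ennreal_ofReal,
    max_eq_left (mul_nonneg hb.le (klFun_nonneg (by positivity))), mul_klFun_div ha hb]

@[simp]
lemma klGap_self (a : ℝ) : klGap a a = 0 := by
  rcases eq_or_ne a 0 with rfl | ha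
  · simp [klGap_zero_left]
  · simp [klGap, ha, klFun_one]

lemma klGap_eq_zero_iff {a b : ℝ} (ha : 0 ≤ a) (hb : 0 ≤ b) : klGap a b = 0 ↔ a = b := by
  refine ⟨fun h => ?_, fun h => h ▸ klGap_self a⟩
  rcases hb.eq_or_lt with rfl | hb
  · rcases ha.eq_or_lt with rfl | ha
    · rfl
    · simp [klGap_zero_right ha] at h
  · rw [klGap, if_neg fun h => hb.ne' h.1, ENNReal.ofReal_eq_zero] at h
    have hkl : klFun (a / b) = 0 :=
      le_antisymm (nonpos_of_mul_nonpos_right h hb) (klFun_nonneg (by positivity))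
    exact (div_eq_one_iff_eq hb.ne').1 ((klFun_eq_zero_iff (by positivity)).1 hkl)

lemma elog_of_pos {r : ℝ} (h : 0 < r) : elog r = (Real.log r : EReal) := if_neg h.not_ge

lemma elog_zero : elog 0 = ⊥ := if_pos le_rfl

lemma coe_mul_elog_sub_elog {a b : ℝ} (ha : 0 ≤ a) (hb : 0 ≤ b) :
    (a : EReal) * (elog a - elog b) = klGap a b + ((a - b : ℝ) : EReal) := by
  rcases ha.eq_or_lt with rfl | ha
  · rw [klGap_zero_left, EReal.coe_ennreal_ofReal, max_eq_left hb, ← EReal.coe_add]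
    simp
  rcases hb.eq_or_lt with rfl | hb
  · rw [klGap_zero_right ha, elog_zero, elog_of_pos ha, EReal.coe_sub_bot,
      EReal.mul_top_of_pos (EReal.coe_pos.2 ha), EReal.coe_ennreal_top, EReal.top_add_coe]
  · rw [coe_klGap_of_pos ha hb, elog_of_pos ha, elog_of_pos hb, ← EReal.coe_sub,
      ← EReal.coe_mul, ← EReal.coe_add]
    ring_nf

lemma epos_coe (r : ℝ) : epos (r : EReal) = ENNReal.ofReal r := by
  simp [epos]

section Integration

variable {X : Type*} [MeasurableSpace X] {μ : Measure X}

lemma Measurable.klGap {f g : X → ℝ} (hf : Measurable f) (hg : Measurable g) :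
    Measurable fun x => klGap (f x) (g x) :=
  Measurable.ite ((measurableSet_eq_fun hg measurable_const).inter
      (measurableSet_lt measurable_const hf)) measurable_const
    (ENNReal.measurable_ofReal.comp (hg.mul (measurable_klFun.comp (hf.div hg))))

lemma lintegral_klGap_eq_zero_iff {f g : X → ℝ} (hfm : Measurable f) (hgm : Measurable g)
    (hf : ∀ x, 0 ≤ f x) (hg : ∀ x, 0 ≤ g x) :
    ∫⁻ x, klGap (f x) (g x) ∂μ = 0 ↔ f =ᵐ[μ] g := by
  rw [lintegral_eq_zero_iff (hfm.klGap hgm)]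
  exact Filter.eventually_congr (ae_of_all _ fun x => klGap_eq_zero_iff (hf x) (hg x))

lemma eintE_congr_ae {f g : X → EReal} (h : f =ᵐ[μ] g) : eintE μ f = eintE μ g := by
  rw [eintE, eintE, lintegral_congr_ae (h.mono fun x (hx : f x = g x) => congrArg epos hx),
    lintegral_congr_ae (h.mono fun x (hx : f x = g x) => congrArg (fun e => epos (-e)) hx)]

lemma eintE_coe {g : X → ℝ} (hg : Integrable g μ) :
    eintE μ (fun x => (g x : EReal)) = (∫ x, g x ∂μ : ℝ) := by
  have hneg : ∫⁻ x, ENNReal.ofReal (-g x) ∂μ ≠ ⊤ := hg.neg.lintegral_lt_top.ne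
  simp only [eintE, ← EReal.coe_neg, epos_coe]
  rw [integral_eq_lintegral_pos_part_sub_lintegral_neg_part hg, EReal.coe_sub,
    EReal.coe_ennreal_toReal hg.lintegral_lt_top.ne, EReal.coe_ennreal_toReal hneg]

lemma eintE_coe_ennreal_add {h : X → ℝ≥0∞} {r : X → ℝ} (hh : AEMeasurable h μ)
    (hr : Integrable r μ) :
    eintE μ (fun x => (h x : EReal) + r x) = (∫⁻ x, h x ∂μ : EReal) + ∫ x, r x ∂μ := by
  by_cases hfin : ∫⁻ x, h x ∂μ = ⊤
  · have hr_meas : AEMeasurable (fun x => ENNReal.ofReal (-r x)) μ :=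
      hr.aemeasurable.neg.ennreal_ofReal
    have hr_neg : ∫⁻ x, ENNReal.ofReal (-r x) ∂μ ≠ ⊤ := hr.neg.lintegral_lt_top.ne
    have hpos : ∀ x, h x ≤ epos (h x + r x) + ENNReal.ofReal (-r x) := fun x => by
      rcases eq_or_ne (h x) ⊤ with hx | hx
      · simp [hx, epos]
      · rw [← EReal.coe_ennreal_toReal hx, ← EReal.coe_add, epos_coe]
        calc h x = ENNReal.ofReal ((h x).toReal + r x + -r x) := by
              rw [add_neg_cancel_right, ENNReal.ofReal_toReal hx]
          _ ≤ _ := ENNReal.ofReal_add_le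
    have hneg : ∀ x, epos (-(h x + r x)) ≤ ENNReal.ofReal (-r x) := fun x => by
      rcases eq_or_ne (h x) ⊤ with hx | hx
      · simp [hx, epos]
      · rw [← EReal.coe_ennreal_toReal hx, ← EReal.coe_add, ← EReal.coe_neg, epos_coe]
        exact ENNReal.ofReal_le_ofReal (by linarith [ENNReal.toReal_nonneg (a := h x)])
    have hpos_top : ∫⁻ x, epos (h x + r x) ∂μ = ⊤ := by
      have hle := lintegral_mono (μ := μ) hpos
      rw [hfin, lintegral_add_right' _ hr_meas, top_le_iff, ENNReal.add_eq_top] at hle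
      exact hle.resolve_right hr_neg
    have hneg_fin : ∫⁻ x, epos (-(h x + r x)) ∂μ ≠ ⊤ :=
      ne_top_of_le_ne_top hr_neg (lintegral_mono hneg)
    rw [eintE, hpos_top, hfin, EReal.coe_ennreal_top, EReal.top_add_coe,
      EReal.top_sub (EReal.coe_ennreal_eq_top_iff.not.2 hneg_fin)]
  · have hlt : ∀ᵐ x ∂μ, h x < ⊤ := ae_lt_top' hh hfin
    have hint : Integrable (fun x => (h x).toReal) μ :=
      integrable_toReal_of_lintegral_ne_top hh hfin
    rw [eintE_congr_ae (g := fun x => (((h x).toReal + r x : ℝ) : EReal)),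
      eintE_coe (g := fun x => (h x).toReal + r x) (hint.add hr), integral_add hint hr,
      integral_toReal hh hlt, EReal.coe_add, EReal.coe_ennreal_toReal hfin]
    filter_upwards [hlt] with x hx
    rw [EReal.coe_add, EReal.coe_ennreal_toReal hx.ne]

lemma eintE_mul_elog_sub_elog {f g : X → ℝ} (hfm : Measurable f) (hgm : Measurable g)
    (hf : ∀ x, 0 ≤ f x) (hg : ∀ x, 0 ≤ g x) (hfi : Integrable f μ) (hgi : Integrable g μ)
    (hfg : ∫ x, f x ∂μ = ∫ x, g x ∂μ) :
    eintE μ (fun x => (f x : EReal) * (elog (f x) - elog (g x)))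
      = (∫⁻ x, klGap (f x) (g x) ∂μ : EReal) := by
  simp_rw [coe_mul_elog_sub_elog (hf _) (hg _)]
  rw [eintE_coe_ennreal_add (r := fun x => f x - g x) (hfm.klGap hgm).aemeasurable
    (hfi.sub hgi), integral_sub hfi hgi, hfg, sub_self, EReal.coe_zero, add_zero]

variable {p q w : X → ℝ}

lemma renorm_nonneg {x : X} (hp : 0 ≤ p x) (hw : 0 ≤ w x) (hpw : 0 ≤ ∫ y, p y * w y ∂μ) :
    0 ≤ renorm μ p w x :=
  div_nonneg (mul_nonneg hw hp) hpw

lemma Measurable.renorm (hp : Measurable p) (hw : Measurable w) : Measurable (renorm μ p w) :=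
  (hw.mul hp).div_const _

lemma integrable_renorm (hpw : ∫ y, p y * w y ∂μ ≠ 0) : Integrable (renorm μ p w) μ :=
  ((Integrable.of_integral_ne_zero hpw).div_const (∫ y, p y * w y ∂μ)).congr
    (ae_of_all _ fun x => by simp only [renorm, mul_comm])

lemma integral_renorm (hpw : ∫ y, p y * w y ∂μ ≠ 0) : ∫ x, renorm μ p w x ∂μ = 1 := by
  simp_rw [renorm, mul_comm (w _)]
  rw [integral_div, div_self hpw]

lemma renorm_ae_eq_iff (hw : ∀ x, 0 ≤ w x) (hpw : 0 < ∫ y, p y * w y ∂μ)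
    (hqw : 0 < ∫ y, q y * w y ∂μ) :
    renorm μ q w =ᵐ[μ] renorm μ p w ↔ ∃ c : ℝ, 0 < c ∧ ∀ᵐ x ∂μ, 0 < w x → p x = c * q x := by
  constructor
  · intro h
    refine ⟨(∫ y, p y * w y ∂μ) / ∫ y, q y * w y ∂μ, div_pos hpw hqw,
      h.mono fun x hx hwx => ?_⟩
    rw [renorm, renorm, div_eq_div_iff hqw.ne' hpw.ne'] at hx
    rw [div_mul_eq_mul_div, eq_div_iff hqw.ne']
    exact mul_left_cancel₀ hwx.ne' (by linear_combination -hx)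
  · rintro ⟨c, hc, hpc⟩
    have hpq : ∀ᵐ x ∂μ, p x * w x = c * (q x * w x) := hpc.mono fun x hx => by
      rcases (hw x).eq_or_lt with h0 | h0
      · rw [← h0]; ring
      · rw [hx h0]; ring
    have hI : ∫ y, p y * w y ∂μ = c * ∫ y, q y * w y ∂μ := by
      rw [← integral_const_mul]
      exact integral_congr_ae hpq
    filter_upwards [hpq] with x hx
    rw [renorm, renorm, mul_comm (w x) (p x), hx, hI]
    field_simp

lemma SCLe_mul_eq {x : X} (hp : 0 ≤ p x) (hq : 0 ≤ q x) (hw : 0 ≤ w x)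
    (hpw : 0 < ∫ y, p y * w y ∂μ) (hqw : 0 < ∫ y, q y * w y ∂μ) :
    SCLe μ p w x * q x
      = ((ENNReal.ofReal (∫ y, q y * w y ∂μ) * klGap (renorm μ q w x) (renorm μ p w x)
          : ℝ≥0∞) : EReal)
        + (((∫ y, q y * w y ∂μ) * (renorm μ q w x - renorm μ p w x)
            + w x * q x * (Real.log (∫ y, q y * w y ∂μ) - Real.log (q x)) : ℝ) : EReal) := by
  have hSCL : SCLe μ p w x
      = -(w x : EReal) * elog (p x) + (w x * Real.log (∫ y, p y * w y ∂μ) : ℝ) := by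
    rw [SCLe, elog_of_pos hpw, EReal.coe_mul]
  rcases (mul_nonneg hw hq).eq_or_lt with hwq | hwq
  · have hrq : renorm μ q w x = 0 := by rw [renorm, ← hwq, zero_div]
    have hlhs : SCLe μ p w x * q x = 0 := by
      rcases mul_eq_zero.1 hwq.symm with h | h
      · simp [SCLe, h]
      · simp [h]
    rw [hlhs, hrq, klGap_zero_left, ← ENNReal.ofReal_mul hqw.le, EReal.coe_ennreal_ofReal,
      max_eq_left (mul_nonneg hqw.le (renorm_nonneg hp hw hpw.le)), ← EReal.coe_add, ← hwq]
    simp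
  have hw' : 0 < w x := pos_of_mul_pos_left hwq hq
  have hq' : 0 < q x := pos_of_mul_pos_right hwq hw
  have hrq : 0 < renorm μ q w x := div_pos hwq hqw
  rcases hp.eq_or_lt with hp0 | hp0
  · have hrp : renorm μ p w x = 0 := by rw [renorm, ← hp0, mul_zero, zero_div]
    rw [hrp, klGap_zero_right hrq, ENNReal.mul_top (ENNReal.ofReal_pos.2 hqw).ne',
      EReal.coe_ennreal_top, EReal.top_add_coe, hSCL, ← hp0, elog_zero,
      EReal.mul_bot_of_neg (by simpa using hw'), EReal.top_add_coe,
      EReal.top_mul_of_pos (EReal.coe_pos.2 hq')]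
  · have hrp : 0 < renorm μ p w x := div_pos (mul_pos hw' hp0) hpw
    rw [EReal.coe_ennreal_mul, EReal.coe_ennreal_ofReal, max_eq_left hqw.le,
      coe_klGap_of_pos hrq hrp, hSCL, elog_of_pos hp0,
      ← EReal.coe_neg, ← EReal.coe_mul, ← EReal.coe_add, ← EReal.coe_mul, ← EReal.coe_mul,
      ← EReal.coe_add, EReal.coe_eq_coe_iff, renorm, renorm,
      Real.log_div hwq.ne' hqw.ne', Real.log_div (mul_pos hw' hp0).ne' hpw.ne',
      Real.log_mul hw'.ne' hq'.ne', Real.log_mul hw'.ne' hp0.ne']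
    field_simp
    ring

lemma eintE_SCLe_mul (hpm : Measurable p) (hqm : Measurable q) (hwm : Measurable w)
    (hp : ∀ x, 0 ≤ p x) (hq : ∀ x, 0 ≤ q x) (hw : ∀ x, 0 ≤ w x)
    (hpw : 0 < ∫ y, p y * w y ∂μ) (hqw : 0 < ∫ y, q y * w y ∂μ)
    (hqq : Integrable (fun x => w x * q x * Real.log (q x)) μ) :
    eintE μ (fun x => SCLe μ p w x * q x)
      = ((ENNReal.ofReal (∫ y, q y * w y ∂μ)
            * ∫⁻ x, klGap (renorm μ q w x) (renorm μ p w x) ∂μ : ℝ≥0∞) : EReal)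
        + ((∫ x, w x * q x * (Real.log (∫ y, q y * w y ∂μ) - Real.log (q x)) ∂μ : ℝ)
            : EReal) := by
  have hwq : Integrable (fun x => w x * q x) μ := by
    simpa only [mul_comm] using Integrable.of_integral_ne_zero hqw.ne'
  have hent : Integrable
      (fun x => w x * q x * (Real.log (∫ y, q y * w y ∂μ) - Real.log (q x))) μ :=
    ((hwq.mul_const _).sub hqq).congr (ae_of_all _ fun x => by simp only [Pi.sub_apply]; ring)
  have hdiff : Integrable (fun x => renorm μ q w x - renorm μ p w x) μ :=
    (integrable_renorm hqw.ne').sub (integrable_renorm hpw.ne')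
  have hgap : Measurable fun x => klGap (renorm μ q w x) (renorm μ p w x) :=
    (hqm.renorm hwm).klGap (hpm.renorm hwm)
  simp_rw [SCLe_mul_eq (hp _) (hq _) (hw _) hpw hqw]
  rw [eintE_coe_ennreal_add (hgap.const_mul _).aemeasurable
      (r := fun x => _ * (renorm μ q w x - renorm μ p w x) + _) ((hdiff.const_mul _).add hent),
    lintegral_const_mul _ hgap, integral_add (hdiff.const_mul _) hent, integral_const_mul,
    integral_sub (integrable_renorm hqw.ne') (integrable_renorm hpw.ne'),
    integral_renorm hqw.ne', integral_renorm hpw.ne', sub_self, mul_zero, zero_add]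

end Integration

theorem SCL_proportionally_locally_proper_general
    {X : Type*} [MeasurableSpace X] (μ : Measure X)
    (p q w : X → ℝ) (hp : IsDensity μ p) (hq : IsDensity μ q) (hw : IsWeight w)
    (hpw : 0 < ∫ y, p y * w y ∂μ) (hqw : 0 < ∫ y, q y * w y ∂μ)
    (hqq : Integrable (fun x => w x * q x * Real.log (q x)) μ) :
    eintE μ (fun x => SCLe μ q w x * ((q x : ℝ) : EReal))
        ≤ eintE μ (fun x => SCLe μ p w x * ((q x : ℝ) : EReal)) ∧
    (eintE μ (fun x => SCLe μ p w x * ((q x : ℝ) : EReal))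
        = eintE μ (fun x => SCLe μ q w x * ((q x : ℝ) : EReal))
      ↔ ∃ c : ℝ, 0 < c ∧ ∀ᵐ x ∂μ, 0 < w x → p x = c * q x) ∧
    eintE μ (fun x => SCLe μ p w x * ((q x : ℝ) : EReal))
        - eintE μ (fun x => SCLe μ q w x * ((q x : ℝ) : EReal))
      = ((∫ x, q x * w x ∂μ : ℝ) : EReal)
          * eintE μ (fun x =>
              ((renorm μ q w x : ℝ) : EReal)
                * (elog (renorm μ q w x) - elog (renorm μ p w x))) := by
  obtain ⟨hpm, hp, -⟩ := hp
  obtain ⟨hqm, hq, -⟩ := hq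
  obtain ⟨hwm, hw⟩ := hw
  replace hw : ∀ x, 0 ≤ w x := fun x => (hw x).1
  have hrp := fun x => renorm_nonneg (hp x) (hw x) hpw.le
  have hrq := fun x => renorm_nonneg (hq x) (hw x) hqw.le
  set G := ∫⁻ x, klGap (renorm μ q w x) (renorm μ p w x) ∂μ
  set H := ∫ x, w x * q x * (Real.log (∫ y, q y * w y ∂μ) - Real.log (q x)) ∂μ
  have hSq : eintE μ (fun x => SCLe μ q w x * q x) = H := by
    simpa using eintE_SCLe_mul hqm hqm hwm hq hq hw hqw hqw hqq
  have hKL : eintE μ (fun x => (renorm μ q w x : EReal)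
      * (elog (renorm μ q w x) - elog (renorm μ p w x))) = G :=
    eintE_mul_elog_sub_elog (hqm.renorm hwm) (hpm.renorm hwm) hrq hrp (integrable_renorm hqw.ne')
      (integrable_renorm hpw.ne') (by rw [integral_renorm hqw.ne', integral_renorm hpw.ne'])
  have hG : G = 0 ↔ ∃ c : ℝ, 0 < c ∧ ∀ᵐ x ∂μ, 0 < w x → p x = c * q x :=
    (lintegral_klGap_eq_zero_iff (hqm.renorm hwm) (hpm.renorm hwm) hrq hrp).trans
      (renorm_ae_eq_iff hw hpw hqw)
  rw [eintE_SCLe_mul hpm hqm hwm hp hq hw hpw hqw hqq, hSq, hKL, EReal.add_sub_cancel_right]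
  refine ⟨le_add_of_nonneg_left (EReal.coe_ennreal_nonneg _), ?_, ?_⟩
  · rw [← hG]
    simpa [hqw.not_ge] using (EReal.addLECancellable_coe H).inj_left
      (a := ((ENNReal.ofReal (∫ y, q y * w y ∂μ) * G : ℝ≥0∞) : EReal)) (b := 0)
  · rw [EReal.coe_ennreal_mul, EReal.coe_ennreal_ofReal, max_eq_left hqw.le]

/-- The conditional likelihood rule is proportionally locally proper,
and the expected score difference equals `(∫qw)` times the Kullback–Leibler divergence
of the renormalized densities. -/
theorem SCL_proportionally_locally_proper
    {X : Type*} [MeasurableSpace X] (μ : Measure X) [SigmaFinite μ]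
    (p q w : X → ℝ) (hp : IsDensity μ p) (hq : IsDensity μ q) (hw : IsWeight w)
    (hpw : 0 < ∫ y, p y * w y ∂μ) (hqw : 0 < ∫ y, q y * w y ∂μ)
    (hqq : Integrable (fun x => w x * q x * Real.log (q x)) μ)
    (hqp : Integrable (fun x => max (w x * q x * Real.log (p x)) 0) μ) :
    eintE μ (fun x => SCLe μ q w x * ((q x : ℝ) : EReal))
        ≤ eintE μ (fun x => SCLe μ p w x * ((q x : ℝ) : EReal)) ∧
    (eintE μ (fun x => SCLe μ p w x * ((q x : ℝ) : EReal))
        = eintE μ (fun x => SCLe μ q w x * ((q x : ℝ) : EReal))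
      ↔ ∃ c : ℝ, 0 < c ∧ ∀ᵐ x ∂μ, 0 < w x → p x = c * q x) ∧
    eintE μ (fun x => SCLe μ p w x * ((q x : ℝ) : EReal))
        - eintE μ (fun x => SCLe μ q w x * ((q x : ℝ) : EReal))
      = ((∫ x, q x * w x ∂μ : ℝ) : EReal)
          * eintE μ (fun x =>
              ((renorm μ q w x : ℝ) : EReal)
                * (elog (renorm μ q w x) - elog (renorm μ p w x))) :=
  SCL_proportionally_locally_proper_general μ p q w hp hq hw hpw hqw hqq

end
end

section
/- Let p, q : ℝ → (0,∞) be twice continuously differentiable Lebesgue probability densities and let w : ℝ → [0,∞) be continuously differentiable with compact support. Define the weighted Hyvärinen score Ŝ(p,x;w) = 2·(p''(x)/p(x))·w(x) − (p'(x)/p(x))²·w(x) + 2·(p'(x)/p(x))·w'(x). Then ∫_ℝ Ŝ(p,x;w)·q(x) dx − ∫_ℝ Ŝ(q,x;w)·q(x) dx = ∫_ℝ (p'(x)/p(x) − q'(x)/q(x))²·q(x)·w(x) dx ≥ 0. -/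
/-!
With `P = p'/p` one has `p''/p = P' + P²`, so the pointwise difference of the scores,
`Ŝ(p,·;w)·q − Ŝ(q,·;w)·q`, is `(P − Q)²·q·w` plus the derivative of the flux
`2(P − Q)·w·q`. The flux is differentiable and vanishes outside the support of `w`, so its
derivative integrates to zero.
-/

open MeasureTheory

noncomputable section

/-- The weighted Hyvärinen score
`Ŝ(f,x;w) = 2·(f''(x)/f(x))·w(x) − (f'(x)/f(x))²·w(x) + 2·(f'(x)/f(x))·w'(x)`. -/
def ShatR (w f : ℝ → ℝ) (x : ℝ) : ℝ :=
  2 * (deriv (deriv f) x / f x) * w x - (deriv f x / f x) ^ 2 * w x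
    + 2 * (deriv f x / f x) * deriv w x

section

variable {f p q w : ℝ → ℝ} {x : ℝ}

theorem hasDerivAt_logDeriv (hf : DifferentiableAt ℝ f x)
    (hf' : DifferentiableAt ℝ (deriv f) x) (hx : f x ≠ 0) :
    HasDerivAt (logDeriv f) (deriv (deriv f) x / f x - logDeriv f x ^ 2) x := by
  refine (hf'.hasDerivAt.div hf.hasDerivAt hx).congr_deriv ?_
  rw [logDeriv_apply]
  field_simp

theorem ContDiff.continuous_logDeriv (hf : ContDiff ℝ 2 f) (hf0 : ∀ x, f x ≠ 0) :
    Continuous (logDeriv f) :=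
  continuous_iff_continuousAt.2 fun x =>
    (hasDerivAt_logDeriv (hf.differentiable two_ne_zero x)
      (hf.differentiable_deriv_two x) (hf0 x)).continuousAt

def hyvarinenFlux (w p q : ℝ → ℝ) (x : ℝ) : ℝ :=
  2 * (logDeriv p x - logDeriv q x) * w x * q x

theorem hasDerivAt_hyvarinenFlux (hp : DifferentiableAt ℝ p x)
    (hp' : DifferentiableAt ℝ (deriv p) x) (hq : DifferentiableAt ℝ q x)
    (hq' : DifferentiableAt ℝ (deriv q) x) (hw : DifferentiableAt ℝ w x)
    (hp0 : p x ≠ 0) (hq0 : q x ≠ 0) :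
    HasDerivAt (hyvarinenFlux w p q)
      (ShatR w p x * q x - ShatR w q x * q x
        - (logDeriv p x - logDeriv q x) ^ 2 * q x * w x) x := by
  have := ((((hasDerivAt_logDeriv hp hp' hp0).sub (hasDerivAt_logDeriv hq hq' hq0)).const_mul
    2).mul hw.hasDerivAt).mul hq.hasDerivAt
  refine this.congr_deriv ?_
  simp only [ShatR, logDeriv_apply, Pi.mul_apply, Pi.sub_apply]
  field_simp
  ring

theorem HasCompactSupport.shatR (hw : HasCompactSupport w) (f : ℝ → ℝ) :
    HasCompactSupport (ShatR w f) := by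
  have : ShatR w f = (fun x => 2 * (deriv (deriv f) x / f x) - (deriv f x / f x) ^ 2) * w
      + (fun x => 2 * (deriv f x / f x)) * deriv w := by
    funext x
    simp only [Pi.add_apply, Pi.mul_apply, ShatR]
    ring
  rw [this]
  exact hw.mul_left.add hw.deriv.mul_left

theorem ContDiff.continuous_shatR (hf : ContDiff ℝ 2 f) (hf0 : ∀ x, f x ≠ 0)
    (hw : ContDiff ℝ 1 w) : Continuous (ShatR w f) := by
  have := hf.continuous
  have := hf.continuous_deriv one_le_two
  have := (hf.deriv' (n := 1)).continuous_deriv le_rfl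
  have := hw.continuous
  have := hw.continuous_deriv le_rfl
  unfold ShatR
  fun_prop (disch := assumption)

theorem ContDiff.integrable_shatR_mul {g : ℝ → ℝ} (hf : ContDiff ℝ 2 f)
    (hf0 : ∀ x, f x ≠ 0) (hw : ContDiff ℝ 1 w) (hw_supp : HasCompactSupport w)
    (hg : Continuous g) :
    Integrable (fun x => ShatR w f x * g x) :=
  ((hf.continuous_shatR hf0 hw).mul hg).integrable_of_hasCompactSupport
    (hw_supp.shatR f).mul_right

theorem HasCompactSupport.hyvarinenFlux (hw : HasCompactSupport w) (p q : ℝ → ℝ) :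
    HasCompactSupport (hyvarinenFlux w p q) :=
  (hw.mul_left (f := fun x => 2 * (logDeriv p x - logDeriv q x))).mul_right (f' := q)

end

theorem weighted_hyvarinen_divergence_general
    (p q w : ℝ → ℝ)
    (hp : ContDiff ℝ 2 p) (hq : ContDiff ℝ 2 q)
    (hppos : ∀ x, 0 < p x) (hqpos : ∀ x, 0 < q x)
    (hw : ContDiff ℝ 1 w) (hwpos : ∀ x, 0 ≤ w x) (hwsupp : HasCompactSupport w) :
    (∫ x, ShatR w p x * q x) - (∫ x, ShatR w q x * q x)
        = ∫ x, (deriv p x / p x - deriv q x / q x) ^ 2 * q x * w x ∧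
      0 ≤ ∫ x, (deriv p x / p x - deriv q x / q x) ^ 2 * q x * w x := by
  have hp0 x : p x ≠ 0 := (hppos x).ne'
  have hq0 x : q x ≠ 0 := (hqpos x).ne'
  have hflux x := hasDerivAt_hyvarinenFlux (hp.differentiable two_ne_zero x)
    (hp.differentiable_deriv_two x) (hq.differentiable two_ne_zero x)
    (hq.differentiable_deriv_two x) (hw.differentiable one_ne_zero x) (hp0 x) (hq0 x)
  have hflux_cont : Continuous (hyvarinenFlux w p q) :=
    continuous_iff_continuousAt.2 fun x => (hflux x).continuousAt
  have hflux_int : Integrable (hyvarinenFlux w p q) :=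
    hflux_cont.integrable_of_hasCompactSupport (hwsupp.hyvarinenFlux p q)
  have hSp := hp.integrable_shatR_mul hp0 hw hwsupp hq.continuous
  have hSq := hq.integrable_shatR_mul hq0 hw hwsupp hq.continuous
  have hdiv : Integrable fun x => (logDeriv p x - logDeriv q x) ^ 2 * q x * w x :=
    ((((hp.continuous_logDeriv hp0).sub (hq.continuous_logDeriv hq0)).pow 2).mul
      hq.continuous |>.mul hw.continuous).integrable_of_hasCompactSupport hwsupp.mul_left
  have hSdiff : Integrable fun x => ShatR w p x * q x - ShatR w q x * q x := hSp.sub hSq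
  have hflux_zero := integral_eq_zero_of_hasDerivAt_of_integrable hflux (hSdiff.sub hdiv) hflux_int
  rw [integral_sub hSdiff hdiv, integral_sub hSp hSq] at hflux_zero
  refine ⟨sub_eq_zero.1 hflux_zero, integral_nonneg fun x => ?_⟩
  exact mul_nonneg (mul_nonneg (sq_nonneg _) (hqpos x).le) (hwpos x)

/-- For twice continuously differentiable positive Lebesgue probability
densities `p, q` on `ℝ` and a continuously differentiable nonnegative weight function `w`
with compact support, the expected weighted Hyvärinen score difference under `q` equals
`∫ (p'/p − q'/q)²·q·w ≥ 0`. -/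
theorem weighted_hyvarinen_divergence
    (p q w : ℝ → ℝ)
    (hp : ContDiff ℝ 2 p) (hq : ContDiff ℝ 2 q)
    (hppos : ∀ x, 0 < p x) (hqpos : ∀ x, 0 < q x)
    (hpInt : ∫ x, p x = 1) (hqInt : ∫ x, q x = 1)
    (hw : ContDiff ℝ 1 w) (hwpos : ∀ x, 0 ≤ w x) (hwsupp : HasCompactSupport w) :
    (∫ x, ShatR w p x * q x) - (∫ x, ShatR w q x * q x)
        = ∫ x, (deriv p x / p x - deriv q x / q x) ^ 2 * q x * w x ∧
      0 ≤ ∫ x, (deriv p x / p x - deriv q x / q x) ^ 2 * q x * w x :=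
  weighted_hyvarinen_divergence_general p q w hp hq hppos hqpos hw hwpos hwsupp

end
end

section
/- Let p, q be Lebesgue probability densities on ℝ with finite first moments (∫|x|·p(x) dx < ∞ and ∫|x|·q(x) dx < ∞), and let r ∈ ℝ. Then ∫_ℝ [∫_r^∞ (F_p(z) − 1{x ≤ z})² dz]·q(x) dx − ∫_ℝ [∫_r^∞ (F_q(z) − 1{x ≤ z})² dz]·q(x) dx = ∫_r^∞ (F_p(z) − F_q(z))² dz ≥ 0, and equality holds if and only if p = q Lebesgue-a.e. on [r,∞). In particular, the threshold-weighted CRPS with one-sided weight 1_{[r,∞)} is a strictly locally proper weighted scoring rule. -/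
/-!
Integrating first in the observation `x` (Fubini), the expected score of the forecast `p`
under `q` is `∫_r^∞ E_q[(F_p(z) - 1{X ≤ z})²] dz = ∫_r^∞ ((F_p - F_q)² + F_q (1 - F_q)) dz`,
the bias–variance decomposition of a binary forecast at every threshold `z`. All terms are
integrable because `∫_r^∞ (1 - F_p) = E_p (X - r)⁺` is finite for a finite first moment.
Subtracting the case `p = q` leaves `∫_r^∞ (F_p - F_q)²`. This vanishes iff the continuous cdfs
agree on `[r, ∞)`, that is, iff the measures `p dx` and `q dx` restricted to `[r, ∞)` agree on
every half-line `[a, ∞)`, which forces `p = q` a.e. on `[r, ∞)`.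
-/

open MeasureTheory

noncomputable section

/-- A Lebesgue probability density on `ℝ`. -/
def IsDensityR (p : ℝ → ℝ) : Prop :=
  Measurable p ∧ (∀ x, 0 ≤ p x) ∧ ∫ x, p x = 1

/-- The cumulative distribution function `F_p(z) = ∫_{−∞}^z p(t) dt`. -/
def cdf (p : ℝ → ℝ) (z : ℝ) : ℝ := ∫ t in Set.Iic z, p t

/-- The threshold-weighted CRPS `S(p, x; 1_{[r,∞)})`. -/
def twCRPS (p : ℝ → ℝ) (r x : ℝ) : ℝ :=
  ∫ z in Set.Ici r, (cdf p z - if x ≤ z then 1 else 0) ^ 2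

open Set

variable {p q : ℝ → ℝ}

theorem IsDensityR.integrable (hp : IsDensityR p) : Integrable p :=
  Integrable.of_integral_ne_zero (by rw [hp.2.2]; exact one_ne_zero)

theorem cdf_nonneg (hp : IsDensityR p) (z : ℝ) : 0 ≤ cdf p z :=
  setIntegral_nonneg measurableSet_Iic fun x _ => hp.2.1 x

theorem one_sub_cdf (hp : IsDensityR p) (z : ℝ) : 1 - cdf p z = ∫ t in Ioi z, p t := by
  rw [← hp.2.2, ← integral_add_compl measurableSet_Iic hp.integrable, compl_Iic, cdf]
  ring

theorem cdf_le_one (hp : IsDensityR p) (z : ℝ) : cdf p z ≤ 1 := by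
  rw [← sub_nonneg, one_sub_cdf hp]
  exact setIntegral_nonneg measurableSet_Ioi fun x _ => hp.2.1 x

theorem continuous_cdf (hp : Integrable p) : Continuous (cdf p) := by
  have h : cdf p = fun z => cdf p 0 + ∫ t in (0 : ℝ)..z, p t := by
    ext z
    rw [← intervalIntegral.integral_Iic_sub_Iic hp.integrableOn hp.integrableOn, cdf, cdf]
    ring
  rw [h]
  exact continuous_const.add
    (intervalIntegral.continuous_primitive (fun _ _ => hp.intervalIntegrable) 0)

theorem indicator_Ioi_apply_eq (p : ℝ → ℝ) (x z : ℝ) :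
    (Ioi z).indicator p x = (Iio x).indicator (fun _ => p x) z := by
  simp only [indicator_apply, mem_Ioi, mem_Iio]

theorem integrable_prod_indicator_Ioi (hp : Integrable p)
    (hpm : Integrable fun x => |x| * p x) (r : ℝ) :
    Integrable (fun w : ℝ × ℝ => (Ioi w.2).indicator p w.1)
      (volume.prod (volume.restrict (Ici r))) := by
  have hmeas : AEStronglyMeasurable (fun w : ℝ × ℝ => (Ioi w.2).indicator p w.1)
      (volume.prod (volume.restrict (Ici r))) := by
    change AEStronglyMeasurable ({w : ℝ × ℝ | w.2 < w.1}.indicator (fun w => p w.1)) _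
    exact hp.1.comp_fst.indicator (measurableSet_lt measurable_snd measurable_fst)
  have hslice (x : ℝ) :
      ∫ z in Ici r, ‖(Ioi z).indicator p x‖ = max (x - r) 0 * ‖p x‖ := by
    simp only [indicator_Ioi_apply_eq p x, norm_indicator_eq_indicator_norm]
    rw [integral_indicator_const _ measurableSet_Iio, measureReal_restrict_apply measurableSet_Iio,
      inter_comm, Ici_inter_Iio, Real.volume_real_Ico, smul_eq_mul]
  rw [integrable_prod_iff hmeas]
  refine ⟨ae_of_all _ fun x => ?_, ?_⟩
  · simp only [indicator_Ioi_apply_eq p x]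
    refine (integrable_indicator_iff measurableSet_Iio).2 (integrableOn_const ?_)
    rw [Measure.restrict_apply measurableSet_Iio, inter_comm, Ici_inter_Iio]
    exact measure_Ico_lt_top.ne
  · simp only [hslice]
    refine (hpm.norm.add (hp.norm.const_mul |r|)).mono' ?_ (ae_of_all _ fun x => ?_)
    · fun_prop
    · have : max (x - r) 0 ≤ |x| + |r| :=
        max_le (by linarith [le_abs_self x, neg_abs_le r]) (by positivity)
      simp only [Pi.add_apply, norm_mul, Real.norm_eq_abs, abs_abs,
        abs_of_nonneg (le_max_right (x - r) 0)]
      nlinarith [abs_nonneg (p x)]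

theorem integrableOn_Ici_one_sub_cdf (hp : IsDensityR p) (hpm : Integrable fun x => |x| * p x)
    (r : ℝ) : IntegrableOn (fun z => 1 - cdf p z) (Ici r) := by
  show Integrable _ (volume.restrict (Ici r))
  refine (integrable_prod_indicator_Ioi hp.integrable hpm r).integral_prod_right.congr
    (ae_of_all (volume.restrict (Ici r)) fun z => ?_)
  simp only [integral_indicator measurableSet_Ioi, one_sub_cdf hp]

theorem sq_sub_ite_le {a : ℝ} (h0 : 0 ≤ a) (h1 : a ≤ 1) (x z : ℝ) :
    (a - if x ≤ z then 1 else 0) ^ 2 ≤ (if z < x then 1 else 0) + (1 - a) := by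
  split_ifs <;> nlinarith

theorem integrable_prod_sq_cdf_sub_ite_mul (hp : IsDensityR p) (hq : IsDensityR q)
    (hpm : Integrable fun x => |x| * p x) (hqm : Integrable fun x => |x| * q x) (r : ℝ) :
    Integrable (fun w : ℝ × ℝ => (cdf p w.2 - if w.1 ≤ w.2 then 1 else 0) ^ 2 * q w.1)
      (volume.prod (volume.restrict (Ici r))) := by
  refine ((integrable_prod_indicator_Ioi hq.integrable hqm r).add
    (hq.integrable.mul_prod (integrableOn_Ici_one_sub_cdf hp hpm r))).mono' ?_
    (ae_of_all _ fun w => ?_)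
  · have hind : Measurable fun w : ℝ × ℝ => if w.1 ≤ w.2 then (1 : ℝ) else 0 :=
      Measurable.ite (measurableSet_le measurable_fst measurable_snd) measurable_const
        measurable_const
    exact ((((continuous_cdf hp.integrable).measurable.comp measurable_snd).sub hind).pow_const 2
      |>.mul (hq.1.comp measurable_fst)).aestronglyMeasurable
  · obtain ⟨x, z⟩ := w
    have hbound := sq_sub_ite_le (cdf_nonneg hp z) (cdf_le_one hp z) x z
    have hqx := hq.2.1 x
    rw [Real.norm_of_nonneg (by positivity), Pi.add_apply, indicator_apply]
    simp only [mem_Ioi] at hbound ⊢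
    split_ifs at hbound ⊢ <;> nlinarith

theorem integral_sq_sub_ite_mul (hq : IsDensityR q) (a z : ℝ) :
    ∫ x, (a - if x ≤ z then 1 else 0) ^ 2 * q x
      = (a - cdf q z) ^ 2 + cdf q z * (1 - cdf q z) := by
  have h (x : ℝ) : (a - if x ≤ z then 1 else 0) ^ 2 * q x
      = a ^ 2 * q x - (2 * a - 1) * (Iic z).indicator q x := by
    by_cases hxz : x ≤ z <;> simp only [hxz, indicator_apply, mem_Iic, if_true, if_false] <;> ring
  simp_rw [h]
  rw [integral_sub (hq.integrable.const_mul _)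
      ((hq.integrable.indicator measurableSet_Iic).const_mul _),
    integral_const_mul, integral_const_mul, hq.2.2, integral_indicator measurableSet_Iic, ← cdf]
  ring

theorem integral_twCRPS_mul (hp : IsDensityR p) (hq : IsDensityR q)
    (hpm : Integrable fun x => |x| * p x) (hqm : Integrable fun x => |x| * q x) (r : ℝ) :
    ∫ x, twCRPS p r x * q x
      = ∫ z in Ici r, ((cdf p z - cdf q z) ^ 2 + cdf q z * (1 - cdf q z)) := by
  simp_rw [twCRPS, ← integral_mul_const]
  rw [integral_integral_swap (integrable_prod_sq_cdf_sub_ite_mul hp hq hpm hqm r)]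
  simp_rw [integral_sq_sub_ite_mul hq]

theorem integrableOn_Ici_sq_cdf_sub_cdf (hp : IsDensityR p) (hq : IsDensityR q)
    (hpm : Integrable fun x => |x| * p x) (hqm : Integrable fun x => |x| * q x) (r : ℝ) :
    IntegrableOn (fun z => (cdf p z - cdf q z) ^ 2) (Ici r) := by
  have hcont := ((continuous_cdf hp.integrable).sub (continuous_cdf hq.integrable)).pow 2
  refine ((integrableOn_Ici_one_sub_cdf hp hpm r).add
    (integrableOn_Ici_one_sub_cdf hq hqm r)).mono' hcont.aestronglyMeasurable
    (ae_of_all _ fun z => ?_)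
  have := cdf_nonneg hp z; have := cdf_le_one hp z
  have := cdf_nonneg hq z; have := cdf_le_one hq z
  rw [Real.norm_of_nonneg (sq_nonneg _), Pi.add_apply]
  nlinarith

theorem integrableOn_Ici_cdf_mul_one_sub_cdf (hq : IsDensityR q)
    (hqm : Integrable fun x => |x| * q x) (r : ℝ) :
    IntegrableOn (fun z => cdf q z * (1 - cdf q z)) (Ici r) := by
  refine (integrableOn_Ici_one_sub_cdf hq hqm r).mono'
    ((continuous_cdf hq.integrable).mul (continuous_const.sub (continuous_cdf hq.integrable))
      ).aestronglyMeasurable (ae_of_all _ fun z => ?_)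
  have := cdf_nonneg hq z; have := cdf_le_one hq z
  rw [Real.norm_of_nonneg (by nlinarith)]
  nlinarith

theorem integral_twCRPS_mul_sub (hp : IsDensityR p) (hq : IsDensityR q)
    (hpm : Integrable fun x => |x| * p x) (hqm : Integrable fun x => |x| * q x) (r : ℝ) :
    (∫ x, twCRPS p r x * q x) - ∫ x, twCRPS q r x * q x
      = ∫ z in Ici r, (cdf p z - cdf q z) ^ 2 := by
  rw [integral_twCRPS_mul hp hq hpm hqm, integral_twCRPS_mul hq hq hqm hqm,
    integral_add (integrableOn_Ici_sq_cdf_sub_cdf hp hq hpm hqm r)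
      (integrableOn_Ici_cdf_mul_one_sub_cdf hq hqm r)]
  simp only [sub_self, zero_pow two_ne_zero, zero_add, add_sub_cancel_right]

theorem setIntegral_sq_cdf_sub_cdf_eq_zero_iff (hp : IsDensityR p) (hq : IsDensityR q)
    (hpm : Integrable fun x => |x| * p x) (hqm : Integrable fun x => |x| * q x) (r : ℝ) :
    ∫ z in Ici r, (cdf p z - cdf q z) ^ 2 = 0 ↔ EqOn (cdf p) (cdf q) (Ici r) := by
  rw [integral_eq_zero_iff_of_nonneg (fun z => sq_nonneg _)
    (integrableOn_Ici_sq_cdf_sub_cdf hp hq hpm hqm r)]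
  constructor
  · intro h
    refine Measure.eqOn_of_ae_eq (μ := volume) ?_ (continuous_cdf hp.integrable).continuousOn
      (continuous_cdf hq.integrable).continuousOn (by rw [interior_Ici, closure_Ioi])
    filter_upwards [h] with z hz
    exact sub_eq_zero.1 (pow_eq_zero_iff two_ne_zero |>.1 hz)
  · intro h
    filter_upwards [ae_restrict_mem measurableSet_Ici] with z hz
    simp [h hz]

theorem eqOn_cdf_of_ae_eq (hp : IsDensityR p) (hq : IsDensityR q) (r : ℝ)
    (h : ∀ᵐ x, x ∈ Ici r → p x = q x) : EqOn (cdf p) (cdf q) (Ici r) := by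
  intro z hz
  have : ∫ t in Ioi z, p t = ∫ t in Ioi z, q t :=
    setIntegral_congr_ae measurableSet_Ioi
      (h.mono fun x hx hzx => hx (mem_Ici.2 (le_trans hz (le_of_lt hzx))))
  linarith [one_sub_cdf hp z, one_sub_cdf hq z]

theorem withDensity_restrict_Ici_apply_Ici (hp : IsDensityR p) (r a : ℝ) :
    (volume.restrict (Ici r)).withDensity (fun x => ENNReal.ofReal (p x)) (Ici a)
      = ENNReal.ofReal (1 - cdf p (a ⊔ r)) := by
  rw [withDensity_apply _ measurableSet_Ici, Measure.restrict_restrict measurableSet_Ici,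
    Ici_inter_Ici, ← ofReal_integral_eq_lintegral_ofReal hp.integrable.integrableOn
      (ae_of_all _ hp.2.1), integral_Ici_eq_integral_Ioi, one_sub_cdf hp]

theorem ae_eq_of_eqOn_cdf (hp : IsDensityR p) (hq : IsDensityR q) (r : ℝ)
    (h : EqOn (cdf p) (cdf q) (Ici r)) : ∀ᵐ x, x ∈ Ici r → p x = q x := by
  have := isFiniteMeasure_withDensity_ofReal (hp.integrable.integrableOn (s := Ici r)).2
  have hμ := Measure.ext_of_Ici
    ((volume.restrict (Ici r)).withDensity fun x => ENNReal.ofReal (p x))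
    ((volume.restrict (Ici r)).withDensity fun x => ENNReal.ofReal (q x)) fun a => by
    rw [withDensity_restrict_Ici_apply_Ici hp, withDensity_restrict_Ici_apply_Ici hq,
      h (le_sup_right : r ≤ a ⊔ r)]
  have hae := (withDensity_eq_iff hp.1.ennreal_ofReal.aemeasurable
    hq.1.ennreal_ofReal.aemeasurable hp.integrable.integrableOn.lintegral_lt_top.ne).1 hμ
  rw [← ae_restrict_iff' measurableSet_Ici]
  filter_upwards [hae] with x hx
  exact (ENNReal.ofReal_eq_ofReal_iff (hp.2.1 x) (hq.2.1 x)).1 hx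

/-- For Lebesgue probability densities `p, q` on `ℝ` with finite first
moments and `r ∈ ℝ`, the expected threshold-weighted CRPS (weight `1_{[r,∞)}`) difference
under `q` equals `∫_r^∞ (F_p − F_q)² dz ≥ 0`, with equality iff `p = q` Lebesgue-a.e. on
`[r,∞)`; so the one-sided threshold-weighted CRPS is strictly locally proper. -/
theorem twCRPS_strictly_locally_proper
    (p q : ℝ → ℝ) (hp : IsDensityR p) (hq : IsDensityR q)
    (hpm : Integrable fun x => |x| * p x) (hqm : Integrable fun x => |x| * q x)
    (r : ℝ) :
    (∫ x, (∫ z in Set.Ici r, (cdf p z - if x ≤ z then 1 else 0) ^ 2) * q x)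
          - (∫ x, (∫ z in Set.Ici r, (cdf q z - if x ≤ z then 1 else 0) ^ 2) * q x)
        = ∫ z in Set.Ici r, (cdf p z - cdf q z) ^ 2 ∧
      0 ≤ ∫ z in Set.Ici r, (cdf p z - cdf q z) ^ 2 ∧
      ((∫ x, (∫ z in Set.Ici r, (cdf p z - if x ≤ z then 1 else 0) ^ 2) * q x)
            - (∫ x, (∫ z in Set.Ici r, (cdf q z - if x ≤ z then 1 else 0) ^ 2) * q x)
          = 0
        ↔ ∀ᵐ x, x ∈ Set.Ici r → p x = q x) := by
  change (∫ x, twCRPS p r x * q x) - (∫ x, twCRPS q r x * q x) = _ ∧ _ ∧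
    ((∫ x, twCRPS p r x * q x) - (∫ x, twCRPS q r x * q x) = 0 ↔ _)
  rw [integral_twCRPS_mul_sub hp hq hpm hqm, setIntegral_sq_cdf_sub_cdf_eq_zero_iff hp hq hpm hqm]
  exact ⟨rfl, setIntegral_nonneg measurableSet_Ici fun z _ => sq_nonneg _,
    ae_eq_of_eqOn_cdf hp hq r, eqOn_cdf_of_ae_eq hp hq r⟩

end
end

section
/- Let (X, F, μ) be a σ-finite measure space, A ∈ F, and n ≥ 1. Let φ : X^n → [0,1] be measurable and invariant under changes of coordinates lying in A^c: φ(x_1,…,x_n) = φ(y_1,…,y_n) whenever for each k ∈ {1,…,n} either x_k = y_k, or both x_k ∈ A^c and y_k ∈ A^c. Then for any two probability densities p, q with p·1_A = q·1_A μ-a.e., ∫_{X^n} φ(x_1,…,x_n)·∏_{k=1}^n p(x_k) dμ^{⊗n} = ∫_{X^n} φ(x_1,…,x_n)·∏_{k=1}^n q(x_k) dμ^{⊗n}. In particular, the power function of such a test φ is constant on the composite hypothesis {p : p·1_A = p_0·1_A μ-a.e.} for any fixed density p_0. -/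
open MeasureTheory

noncomputable section

lemma IsDensity.integrable' {X : Type*} [MeasurableSpace X] {μ : Measure X} {p : X → ℝ}
    (hp : IsDensity μ p) : Integrable p μ := by
  by_contra hcon
  have h := hp.2.2
  rw [integral_undef hcon] at h
  exact zero_ne_one h

/-- One-dimensional key lemma: the integral of `ψ` (a `[0,1]`-valued function constant on `Aᶜ`)
against a density depends only on the restriction of the density to `A`. -/
lemma key_one_dim {X : Type*} [MeasurableSpace X] {μ : Measure X} {A : Set X}
    (hA : MeasurableSet A)
    {ψ g h : X → ℝ} (hψm : Measurable ψ) (hψ0 : ∀ t, 0 ≤ ψ t) (hψ1 : ∀ t, ψ t ≤ 1)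
    (hψc : ∀ s t, s ∈ Aᶜ → t ∈ Aᶜ → ψ s = ψ t)
    (hg : IsDensity μ g) (hh : IsDensity μ h)
    (hgh : ∀ᵐ x ∂μ, x ∈ A → g x = h x) :
    ∫ t, ψ t * g t ∂μ = ∫ t, ψ t * h t ∂μ := by
  have hmulint : ∀ (g : X → ℝ), IsDensity μ g → Integrable (fun t => ψ t * g t) μ := by
    intro g hgd
    refine hgd.integrable'.mono ((hψm.mul hgd.1).aestronglyMeasurable) (ae_of_all _ fun t => ?_)
    rw [Real.norm_eq_abs, Real.norm_eq_abs, abs_mul, abs_of_nonneg (hψ0 t),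
      abs_of_nonneg (hgd.2.1 t)]
    nlinarith [hψ1 t, hψ0 t, hgd.2.1 t]
  have hAgh : ∫ t in A, g t ∂μ = ∫ t in A, h t ∂μ :=
    setIntegral_congr_ae hA (hgh.mono fun x hx h' => hx h')
  have hAc : ∫ t in Aᶜ, g t ∂μ = ∫ t in Aᶜ, h t ∂μ := by
    have h1 := integral_add_compl hA hg.integrable'
    have h2 := integral_add_compl hA hh.integrable'
    rw [hg.2.2] at h1; rw [hh.2.2] at h2
    linarith
  have hAψ : ∫ t in A, ψ t * g t ∂μ = ∫ t in A, ψ t * h t ∂μ :=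
    setIntegral_congr_ae hA (hgh.mono fun x hx h' => by rw [hx h'])
  have hAcψ : ∫ t in Aᶜ, ψ t * g t ∂μ = ∫ t in Aᶜ, ψ t * h t ∂μ := by
    rcases Set.eq_empty_or_nonempty Aᶜ with he | ⟨s, hs⟩
    · simp [he]
    · have e1 : ∀ (g : X → ℝ), ∫ t in Aᶜ, ψ t * g t ∂μ = ψ s * ∫ t in Aᶜ, g t ∂μ := by
        intro g
        rw [← integral_const_mul]
        exact setIntegral_congr_fun hA.compl fun t ht => by rw [hψc t s ht hs]
      rw [e1 g, e1 h, hAc]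
  calc ∫ t, ψ t * g t ∂μ = (∫ t in A, ψ t * g t ∂μ) + ∫ t in Aᶜ, ψ t * g t ∂μ :=
        (integral_add_compl hA (hmulint g hg)).symm
    _ = (∫ t in A, ψ t * h t ∂μ) + ∫ t in Aᶜ, ψ t * h t ∂μ := by rw [hAψ, hAcψ]
    _ = ∫ t, ψ t * h t ∂μ := integral_add_compl hA (hmulint h hh)

/-- One-step replacement lemma: replacing the density of a single coordinate by another
density agreeing a.e. on `A` does not change the power of an invariant test. -/
lemma step_lemma {X : Type*} [MeasureSpace X] [SigmaFinite (volume : Measure X)]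
    {A : Set X} (hA : MeasurableSet A) {m : ℕ}
    {φ : (Fin (m + 1) → X) → ℝ} (hφm : Measurable φ)
    (hφ01 : ∀ x, φ x ∈ Set.Icc (0 : ℝ) 1)
    (hinv : ∀ x y : Fin (m + 1) → X,
      (∀ k, x k = y k ∨ (x k ∈ Aᶜ ∧ y k ∈ Aᶜ)) → φ x = φ y)
    (d : Fin (m + 1) → X → ℝ) (hd : ∀ k, IsDensity volume (d k)) (i : Fin (m + 1))
    {g h : X → ℝ} (hg : IsDensity volume g) (hh : IsDensity volume h)
    (hgh : ∀ᵐ x, x ∈ A → g x = h x) :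
    ∫ x : Fin (m + 1) → X, φ x * ∏ k, Function.update d i g k (x k)
      = ∫ x : Fin (m + 1) → X, φ x * ∏ k, Function.update d i h k (x k) := by
  set e := MeasurableEquiv.piFinSuccAbove (fun _ : Fin (m + 1) => X) i with he
  have hmp := measurePreserving_piFinSuccAbove (fun _ : Fin (m + 1) => (volume : Measure X)) i
  have h1 : ∀ (t : X) (y : Fin m → X), e.symm (t, y) i = t := fun t y =>
    Fin.insertNth_apply_same (α := fun _ => X) i t y
  have h2 : ∀ (t : X) (y : Fin m → X) (j : Fin m), e.symm (t, y) (i.succAbove j) = y j :=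
    fun t y j => Fin.insertNth_apply_succAbove (α := fun _ => X) i t y j
  have key : ∀ (g : X → ℝ), IsDensity volume g →
      ∫ x : Fin (m + 1) → X, φ x * ∏ k, Function.update d i g k (x k)
        = ∫ y : Fin m → X, (∏ j, d (i.succAbove j) (y j)) *
            ∫ t, φ (e.symm (t, y)) * g t := by
    intro g hg
    have hupdm : ∀ k, Measurable (Function.update d i g k) := by
      intro k
      by_cases hk : k = i
      · subst hk; simpa using hg.1
      · rw [Function.update_of_ne hk]; exact (hd k).1
    have hupd0 : ∀ k t, 0 ≤ Function.update d i g k t := by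
      intro k t
      by_cases hk : k = i
      · subst hk; simpa using hg.2.1 t
      · rw [Function.update_of_ne hk]; exact (hd k).2.1 t
    have hFmeas : Measurable (fun x : Fin (m + 1) → X =>
        φ x * ∏ k, Function.update d i g k (x k)) :=
      hφm.mul (Finset.measurable_prod _ fun k _ => (hupdm k).comp (measurable_pi_apply k))
    have hprodint : Integrable (fun x : Fin (m + 1) → X =>
        ∏ k, Function.update d i g k (x k)) := by
      refine Integrable.fin_nat_prod (𝕜 := ℝ) fun k => ?_
      by_cases hk : k = i
      · subst hk; simpa using hg.integrable'
      · rw [Function.update_of_ne hk]; exact (hd k).integrable'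
    have hFint : Integrable (fun x : Fin (m + 1) → X =>
        φ x * ∏ k, Function.update d i g k (x k)) := by
      refine hprodint.mono hFmeas.aestronglyMeasurable (ae_of_all _ fun x => ?_)
      have h0 : 0 ≤ ∏ k, Function.update d i g k (x k) :=
        Finset.prod_nonneg fun k _ => hupd0 k (x k)
      rw [Real.norm_eq_abs, Real.norm_eq_abs, abs_mul, abs_of_nonneg (hφ01 x).1,
        abs_of_nonneg h0]
      exact mul_le_of_le_one_left h0 (hφ01 x).2
    have hFint' : Integrable (fun z : X × (Fin m → X) =>
        φ (e.symm z) * ∏ k, Function.update d i g k (e.symm z k))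
        ((volume : Measure X).prod (Measure.pi fun _ : Fin m => (volume : Measure X))) :=
      ((hmp.symm e).integrable_comp_emb e.symm.measurableEmbedding).2 hFint
    have hpoint : ∀ (t : X) (y : Fin m → X),
        φ (e.symm (t, y)) * ∏ k, Function.update d i g k (e.symm (t, y) k)
          = (∏ j, d (i.succAbove j) (y j)) * (φ (e.symm (t, y)) * g t) := by
      intro t y
      rw [Fin.prod_univ_succAbove (fun k => Function.update d i g k (e.symm (t, y) k)) i,
        h1 t y, Function.update_self,
        Finset.prod_congr rfl (fun j _ => by
          rw [h2 t y j, Function.update_of_ne (Fin.succAbove_ne i j)])]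
      ring
    calc ∫ x : Fin (m + 1) → X, φ x * ∏ k, Function.update d i g k (x k)
        = ∫ z : X × (Fin m → X),
            φ (e.symm z) * ∏ k, Function.update d i g k (e.symm z k)
            ∂((volume : Measure X).prod (Measure.pi fun _ : Fin m => (volume : Measure X))) :=
          ((hmp.symm e).integral_comp' _).symm
      _ = ∫ y : Fin m → X, ∫ t : X,
            φ (e.symm (t, y)) * ∏ k, Function.update d i g k (e.symm (t, y) k)
            ∂(volume : Measure X) ∂(Measure.pi fun _ : Fin m => (volume : Measure X)) :=
          integral_prod_symm _ hFint'
      _ = ∫ y : Fin m → X, ((∏ j, d (i.succAbove j) (y j)) *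
            ∫ t, φ (e.symm (t, y)) * g t ∂(volume : Measure X))
            ∂(Measure.pi fun _ : Fin m => (volume : Measure X)) := by
          refine integral_congr_ae (ae_of_all _ fun y => ?_)
          simp_rw [hpoint, integral_const_mul]
  rw [key g hg, key h hh]
  refine integral_congr_ae (ae_of_all _ fun y => ?_)
  have hinsm : Measurable (fun t : X => e.symm (t, y)) :=
    e.symm.measurable.comp (measurable_id.prodMk measurable_const)
  refine congrArg (fun r => (∏ j, d (i.succAbove j) (y j)) * r)
    (key_one_dim hA (hφm.comp hinsm) (fun t => (hφ01 _).1) (fun t => (hφ01 _).2)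
      ?_ hg hh hgh)
  intro s t hs ht
  refine hinv _ _ fun k => ?_
  by_cases hk : k = i
  · subst hk
    right
    rw [h1 s y, h1 t y]
    exact ⟨hs, ht⟩
  · obtain ⟨j, rfl⟩ := Fin.exists_succAbove_eq hk
    left
    rw [h2 s y j, h2 t y j]

/-- If a test `φ : X^n → [0,1]` is invariant under changes of the
coordinates lying in `Aᶜ`, then its power is the same under any two densities that agree
μ-a.e. on `A`; in particular its power function is constant on the composite hypothesis
`{p : p·1_A = p_0·1_A μ-a.e.}`. -/
theorem invariant_test_constant_power
    {X : Type*} [MeasurableSpace X] (μ : Measure X) [SigmaFinite μ]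
    (A : Set X) (hA : MeasurableSet A)
    (n : ℕ) (hn : 1 ≤ n)
    (φ : (Fin n → X) → ℝ) (hφm : Measurable φ)
    (hφ01 : ∀ x, φ x ∈ Set.Icc (0 : ℝ) 1)
    (hinv : ∀ x y : Fin n → X,
      (∀ k, x k = y k ∨ (x k ∈ Aᶜ ∧ y k ∈ Aᶜ)) → φ x = φ y)
    (p q : X → ℝ) (hp : IsDensity μ p) (hq : IsDensity μ q)
    (hpq : ∀ᵐ x ∂μ, x ∈ A → p x = q x) :
    ∫ x, φ x * ∏ k, p (x k) ∂(Measure.pi fun _ : Fin n => μ)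
      = ∫ x, φ x * ∏ k, q (x k) ∂(Measure.pi fun _ : Fin n => μ) := by
  obtain ⟨m, rfl⟩ : ∃ m, n = m + 1 := ⟨n - 1, by omega⟩
  letI : MeasureSpace X := ⟨μ⟩
  haveI : SigmaFinite (volume : Measure X) := ‹SigmaFinite μ›
  set c : ℕ → Fin (m + 1) → X → ℝ := fun N k => if (k : ℕ) < N then q else p with hc
  have hcd : ∀ N k, IsDensity μ (c N k) := by
    intro N k
    by_cases hk : (k : ℕ) < N <;> simp [hc, hk, hp, hq]
  have main : ∀ N : ℕ, N ≤ m + 1 →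
      ∫ x, φ x * ∏ k, p (x k) ∂(Measure.pi fun _ : Fin (m + 1) => μ)
        = ∫ x, φ x * ∏ k, c N k (x k) ∂(Measure.pi fun _ : Fin (m + 1) => μ) := by
    intro N
    induction N with
    | zero => intro _; simp [hc]
    | succ N ih =>
      intro hN
      rw [ih (by omega)]
      set i : Fin (m + 1) := ⟨N, by omega⟩ with hi
      have h1 : c N = Function.update (c N) i p := by
        funext k
        by_cases hk : k = i
        · subst hk; simp [hc, hi]
        · rw [Function.update_of_ne hk]
      have h2 : c (N + 1) = Function.update (c N) i q := by
        funext k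
        by_cases hk : k = i
        · subst hk; simp [hc, hi]
        · rw [Function.update_of_ne hk]
          have hne : (k : ℕ) ≠ N := fun hcon => hk (Fin.ext (by simpa [hi] using hcon))
          simp only [hc]
          by_cases hlt : (k : ℕ) < N
          · simp [hlt, Nat.lt_succ_of_lt hlt]
          · have h' : ¬(k : ℕ) < N + 1 := by omega
            simp [hlt, h']
      rw [h1, h2]
      exact step_lemma hA hφm hφ01 hinv (c N) (hcd N) i hp hq hpq
  have hfin : c (m + 1) = fun _ => q := by
    funext k
    simp [hc, k.isLt]
  have := main (m + 1) le_rfl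
  rw [hfin] at this
  exact this

end
end

section
/- Let (X, F, μ) be a σ-finite measure space, A ∈ F, and let p_0, p_1 be probability densities with 0 < P_0(A) < 1 and 0 < P_1(A) < 1, where P_j(A) = ∫_A p_j dμ and P_j(A^c) = 1 − P_j(A). Let α ∈ (0,1). Define the censored likelihood ratio r(x) = p_1(x)/p_0(x) for x ∈ A and r(x) = P_1(A^c)/P_0(A^c) for x ∈ A^c, and let φ_cen : X → [0,1] be a threshold test of the form φ_cen(x) = 1 if r(x) > c, φ_cen(x) = γ if r(x) = c, φ_cen(x) = 0 if r(x) < c, for some c ≥ 0 and γ ∈ [0,1], with size exactly α under the null: ∫_A φ_cen·p_0 dμ + φ_cen|_{A^c}·P_0(A^c) = α (the value φ_cen|_{A^c} of φ_cen on A^c is constant). Then φ_cen is uniformly most powerful of level α for the composite testing problem: for every measurable test φ : X → [0,1] satisfying ∫_X φ·p dμ ≤ α for all densities p with p·1_A = p_0·1_A μ-a.e., and for every density q with q·1_A = p_1·1_A μ-a.e., one has ∫_X φ_cen·q dμ ≥ ∫_X φ·q dμ. -/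
open MeasureTheory
open scoped Classical ENNReal

noncomputable section

/-- The censored likelihood ratio: `p₁(x)/p₀(x)` for `x ∈ A` and `P₁(Aᶜ)/P₀(Aᶜ)` for
`x ∈ Aᶜ` (computed in `ℝ≥0∞`, so that `a/0 = ∞` for `a > 0`). -/
def censoredRatio {X : Type*} [MeasurableSpace X] (μ : Measure X) (A : Set X)
    (p₀ p₁ : X → ℝ) (x : X) : ℝ≥0∞ :=
  if x ∈ A then ENNReal.ofReal (p₁ x) / ENNReal.ofReal (p₀ x)
  else ENNReal.ofReal (1 - ∫ z in A, p₁ z ∂μ) / ENNReal.ofReal (1 - ∫ z in A, p₀ z ∂μ)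

lemma sign_aux (c γ : ℝ) (hc : 0 ≤ c)
    (u v w : ℝ) (hu : 0 ≤ u) (hv : 0 ≤ v) (hw0 : 0 ≤ w) (hw1 : w ≤ 1) :
    0 ≤ ((if ENNReal.ofReal c < ENNReal.ofReal v / ENNReal.ofReal u then (1:ℝ)
      else if ENNReal.ofReal v / ENNReal.ofReal u = ENNReal.ofReal c then γ else 0) - w)
      * (v - c * u) := by
  rcases lt_trichotomy (c * u) v with h | h | h
  · rw [if_pos]
    · nlinarith
    · rcases eq_or_lt_of_le hu with hu0 | hu0
      · rw [← hu0, ENNReal.ofReal_zero, ENNReal.div_zero]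
        · exact ENNReal.ofReal_lt_top
        · simp only [ne_eq, ENNReal.ofReal_eq_zero, not_le]
          nlinarith
      · rw [ENNReal.lt_div_iff_mul_lt (Or.inl (ne_of_gt (ENNReal.ofReal_pos.mpr hu0)))
          (Or.inl ENNReal.ofReal_ne_top), ← ENNReal.ofReal_mul hc]
        exact (ENNReal.ofReal_lt_ofReal_iff (lt_of_le_of_lt (mul_nonneg hc hu) h)).mpr h
  · rw [← h]; simp
  · have hu0 : 0 < u := by nlinarith
    have hlt : ENNReal.ofReal v / ENNReal.ofReal u < ENNReal.ofReal c := by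
      rw [ENNReal.div_lt_iff (Or.inl (ne_of_gt (ENNReal.ofReal_pos.mpr hu0)))
        (Or.inl ENNReal.ofReal_ne_top), ← ENNReal.ofReal_mul hc]
      exact (ENNReal.ofReal_lt_ofReal_iff (by nlinarith)).mpr h
    rw [if_neg (not_lt.mpr hlt.le), if_neg (ne_of_lt hlt)]
    nlinarith

lemma int_mul_aux {X : Type*} [MeasurableSpace X] {μ : Measure X} {g h : X → ℝ}
    (hg : Measurable g) (hg0 : ∀ x, 0 ≤ g x) (hg1 : ∀ x, g x ≤ 1)
    (hh0 : ∀ x, 0 ≤ h x) (hih : Integrable h μ) :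
    Integrable (fun x => g x * h x) μ := by
  refine hih.mono' (hg.aestronglyMeasurable.mul hih.aestronglyMeasurable)
    (ae_of_all _ fun x => ?_)
  rw [Real.norm_eq_abs, abs_mul, abs_of_nonneg (hg0 x), abs_of_nonneg (hh0 x)]
  exact mul_le_of_le_one_left (hh0 x) (hg1 x)

/-- A threshold test `φ_cen` based on the censored likelihood ratio,
with size exactly `α` under the null, is uniformly most powerful of level `α` for the
composite testing problem `H₀ : p·1_A = p₀·1_A` vs `H₁ : p·1_A = p₁·1_A`. -/
theorem censored_NP_test_UMP
    {X : Type*} [MeasurableSpace X] (μ : Measure X) [SigmaFinite μ]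
    (A : Set X) (hA : MeasurableSet A)
    (p₀ p₁ : X → ℝ) (hp₀ : IsDensity μ p₀) (hp₁ : IsDensity μ p₁)
    (hP₀A : (∫ z in A, p₀ z ∂μ) ∈ Set.Ioo (0 : ℝ) 1)
    (hP₁A : (∫ z in A, p₁ z ∂μ) ∈ Set.Ioo (0 : ℝ) 1)
    (α : ℝ) (hα : α ∈ Set.Ioo (0 : ℝ) 1)
    (c : ℝ) (hc : 0 ≤ c) (γ : ℝ) (hγ : γ ∈ Set.Icc (0 : ℝ) 1)
    (φcen : X → ℝ)
    -- `φ_cen` is the threshold test at `c` with randomization `γ`: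
    (hform : ∀ x, φcen x =
      if ENNReal.ofReal c < censoredRatio μ A p₀ p₁ x then 1
      else if censoredRatio μ A p₀ p₁ x = ENNReal.ofReal c then γ else 0)
    -- `φ_cen` has size exactly `α` under the null (its value on `Aᶜ` is constant):
    (hsize : (∫ x in A, φcen x * p₀ x ∂μ)
        + (if ENNReal.ofReal c <
              ENNReal.ofReal (1 - ∫ z in A, p₁ z ∂μ)
                / ENNReal.ofReal (1 - ∫ z in A, p₀ z ∂μ) then 1
           else if ENNReal.ofReal (1 - ∫ z in A, p₁ z ∂μ)
                / ENNReal.ofReal (1 - ∫ z in A, p₀ z ∂μ) = ENNReal.ofReal c then γ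
           else 0) * (1 - ∫ z in A, p₀ z ∂μ) = α) :
    -- `φ_cen` is uniformly most powerful among level-`α` tests:
    ∀ φ : X → ℝ, Measurable φ → (∀ x, φ x ∈ Set.Icc (0 : ℝ) 1) →
      (∀ p : X → ℝ, IsDensity μ p → (∀ᵐ x ∂μ, x ∈ A → p x = p₀ x) →
        ∫ x, φ x * p x ∂μ ≤ α) →
      ∀ q : X → ℝ, IsDensity μ q → (∀ᵐ x ∂μ, x ∈ A → q x = p₁ x) →
        ∫ x, φ x * q x ∂μ ≤ ∫ x, φcen x * q x ∂μ := by
  intro φ hφm hφ01 hlevel q hq hqA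
  obtain ⟨hp₀m, hp₀0, hp₀1⟩ := hp₀
  obtain ⟨hp₁m, hp₁0, hp₁1⟩ := hp₁
  obtain ⟨hqm, hq0, hq1⟩ := hq
  have hip₀ : Integrable p₀ μ := by
    by_contra h; rw [integral_undef h] at hp₀1; norm_num at hp₀1
  have hip₁ : Integrable p₁ μ := by
    by_contra h; rw [integral_undef h] at hp₁1; norm_num at hp₁1
  have hiq : Integrable q μ := by
    by_contra h; rw [integral_undef h] at hq1; norm_num at hq1
  set P0c : ℝ := 1 - ∫ z in A, p₀ z ∂μ with hP0c
  set P1c : ℝ := 1 - ∫ z in A, p₁ z ∂μ with hP1c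
  have hP0c_pos : 0 < P0c := by have := hP₀A.2; rw [hP0c]; linarith
  have hP1c_pos : 0 < P1c := by have := hP₁A.2; rw [hP1c]; linarith
  set t : ℝ := (if ENNReal.ofReal c < ENNReal.ofReal P1c / ENNReal.ofReal P0c then (1:ℝ)
      else if ENNReal.ofReal P1c / ENNReal.ofReal P0c = ENNReal.ofReal c then γ else 0)
      with ht
  -- measurability and bounds for φcen
  have hrm : Measurable (censoredRatio μ A p₀ p₁) := by
    unfold censoredRatio
    exact Measurable.ite hA (hp₁m.ennreal_ofReal.div hp₀m.ennreal_ofReal) measurable_const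
  have hφcenm : Measurable φcen := by
    have : φcen = fun x =>
        if ENNReal.ofReal c < censoredRatio μ A p₀ p₁ x then (1:ℝ)
        else if censoredRatio μ A p₀ p₁ x = ENNReal.ofReal c then γ else 0 := funext hform
    rw [this]
    exact Measurable.ite (measurableSet_lt measurable_const hrm) measurable_const
      (Measurable.ite (hrm (measurableSet_singleton _)) measurable_const measurable_const)
  have hφcen0 : ∀ x, 0 ≤ φcen x := by
    intro x; rw [hform x]; split_ifs with h1 h2
    · norm_num
    · exact hγ.1
    · exact le_refl _
  have hφcen1 : ∀ x, φcen x ≤ 1 := by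
    intro x; rw [hform x]; split_ifs with h1 h2
    · exact le_refl _
    · exact hγ.2
    · norm_num
  have hφcen_compl : ∀ x ∉ A, φcen x = t := by
    intro x hx
    rw [hform x, ht]
    have : censoredRatio μ A p₀ p₁ x = ENNReal.ofReal P1c / ENNReal.ofReal P0c := by
      unfold censoredRatio; rw [if_neg hx]
    rw [this]
  -- integrable products
  have hiφq := int_mul_aux hφm (fun x => (hφ01 x).1) (fun x => (hφ01 x).2) hq0 hiq
  have hiφcenq := int_mul_aux hφcenm hφcen0 hφcen1 hq0 hiq
  have hiφp₀ := int_mul_aux hφm (fun x => (hφ01 x).1) (fun x => (hφ01 x).2) hp₀0 hip₀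
  have hiφp₁ := int_mul_aux hφm (fun x => (hφ01 x).1) (fun x => (hφ01 x).2) hp₁0 hip₁
  have hiφcenp₀ := int_mul_aux hφcenm hφcen0 hφcen1 hp₀0 hip₀
  have hiφcenp₁ := int_mul_aux hφcenm hφcen0 hφcen1 hp₁0 hip₁
  -- q = p₁ on A (a.e.)
  have hqp₁ : ∫ x in A, φ x * q x ∂μ = ∫ x in A, φ x * p₁ x ∂μ :=
    setIntegral_congr_ae hA (by filter_upwards [hqA] with x h hx; rw [h hx])
  have hqp₁' : ∫ x in A, φcen x * q x ∂μ = ∫ x in A, φcen x * p₁ x ∂μ :=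
    setIntegral_congr_ae hA (by filter_upwards [hqA] with x h hx; rw [h hx])
  have hqA' : ∫ x in A, q x ∂μ = ∫ x in A, p₁ x ∂μ :=
    setIntegral_congr_ae hA (by filter_upwards [hqA] with x h hx; rw [h hx])
  have hqcompl : ∫ x in Aᶜ, q x ∂μ = P1c := by
    have h := integral_add_compl hA hiq
    rw [hq1, hqA'] at h
    rw [hP1c]; linarith
  set β : ℝ := (∫ x in Aᶜ, φ x * q x ∂μ) / P1c with hβ
  have hβP : ∫ x in Aᶜ, φ x * q x ∂μ = β * P1c := (div_mul_cancel₀ _ hP1c_pos.ne').symm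
  have hβ0 : 0 ≤ β :=
    div_nonneg (setIntegral_nonneg hA.compl fun x _ => mul_nonneg (hφ01 x).1 (hq0 x))
      hP1c_pos.le
  have hβ1 : β ≤ 1 := by
    rw [hβ, div_le_one hP1c_pos, ← hqcompl]
    exact setIntegral_mono_on hiφq.integrableOn hiq.integrableOn hA.compl
      (fun x _ => mul_le_of_le_one_left (hq0 x) (hφ01 x).2)
  -- level bound with β
  have hlev' : (∫ x in A, φ x * p₀ x ∂μ) + β * P0c ≤ α := by
    set pst : X → ℝ := fun x => if x ∈ A then p₀ x else (P0c / P1c) * q x with hpst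
    have hpstm : Measurable pst := Measurable.ite hA hp₀m (hqm.const_mul _)
    have hpst0 : ∀ x, 0 ≤ pst x := by
      intro x; rw [hpst]; dsimp only; split_ifs
      · exact hp₀0 x
      · exact mul_nonneg (div_nonneg hP0c_pos.le hP1c_pos.le) (hq0 x)
    have hiA : IntegrableOn pst A μ :=
      (hip₀.integrableOn).congr_fun (fun x hx => (if_pos hx).symm) hA
    have hiAc : IntegrableOn pst Aᶜ μ :=
      ((hiq.const_mul (P0c / P1c)).integrableOn).congr_fun
        (fun x hx => (if_neg hx).symm) hA.compl
    have hipst : Integrable pst μ := by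
      rw [← integrableOn_univ, ← Set.union_compl_self A]
      exact hiA.union hiAc
    have e1 : ∫ x in A, pst x ∂μ = ∫ x in A, p₀ x ∂μ :=
      setIntegral_congr_fun hA fun x hx => if_pos hx
    have e2 : ∫ x in Aᶜ, pst x ∂μ = (P0c / P1c) * ∫ x in Aᶜ, q x ∂μ := by
      rw [setIntegral_congr_fun hA.compl (fun x (hx : x ∈ Aᶜ) => if_neg hx),
        integral_const_mul]
    have hpst1 : ∫ x, pst x ∂μ = 1 := by
      rw [← integral_add_compl hA hipst, e1, e2, hqcompl,
        div_mul_cancel₀ _ hP1c_pos.ne']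
      rw [hP0c]; ring
    have hlev := hlevel pst ⟨hpstm, hpst0, hpst1⟩ (ae_of_all _ fun x hx => if_pos hx)
    have hiφpst := int_mul_aux hφm (fun x => (hφ01 x).1) (fun x => (hφ01 x).2) hpst0 hipst
    rw [← integral_add_compl hA hiφpst] at hlev
    have f1 : ∫ x in A, φ x * pst x ∂μ = ∫ x in A, φ x * p₀ x ∂μ :=
      setIntegral_congr_fun hA fun x hx => by rw [hpst]; dsimp only; rw [if_pos hx]
    have f2 : ∫ x in Aᶜ, φ x * pst x ∂μ = (P0c / P1c) * ∫ x in Aᶜ, φ x * q x ∂μ := by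
      rw [← integral_const_mul]
      refine setIntegral_congr_fun hA.compl fun x (hx : x ∈ Aᶜ) => ?_
      rw [hpst]; dsimp only; rw [if_neg hx]; ring
    rw [f1, f2, hβP] at hlev
    have : P0c / P1c * (β * P1c) = β * P0c := by field_simp
    linarith [hlev, this.symm ▸ hlev]
  -- NP inequality on A
  have hNPA : 0 ≤ ∫ x in A, (φcen x - φ x) * (p₁ x - c * p₀ x) ∂μ := by
    refine setIntegral_nonneg hA fun x hx => ?_
    rw [hform x]
    have : censoredRatio μ A p₀ p₁ x = ENNReal.ofReal (p₁ x) / ENNReal.ofReal (p₀ x) := by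
      unfold censoredRatio; rw [if_pos hx]
    rw [this]
    exact sign_aux c γ hc _ _ _ (hp₀0 x) (hp₁0 x) (hφ01 x).1 (hφ01 x).2
  have hexp : ∫ x in A, (φcen x - φ x) * (p₁ x - c * p₀ x) ∂μ
      = ((∫ x in A, φcen x * p₁ x ∂μ) - ∫ x in A, φ x * p₁ x ∂μ)
        - (c * (∫ x in A, φcen x * p₀ x ∂μ) - c * ∫ x in A, φ x * p₀ x ∂μ) := by
    have h1 : ∫ x in A, (φcen x - φ x) * (p₁ x - c * p₀ x) ∂μ
        = ∫ x in A, ((φcen x * p₁ x - φ x * p₁ x)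
            - (c * (φcen x * p₀ x) - c * (φ x * p₀ x))) ∂μ :=
      integral_congr_ae (ae_of_all _ fun x => by ring)
    have s1 : ∫ x in A, (φcen x * p₁ x - φ x * p₁ x) ∂μ
        = (∫ x in A, φcen x * p₁ x ∂μ) - ∫ x in A, φ x * p₁ x ∂μ :=
      integral_sub hiφcenp₁.integrableOn hiφp₁.integrableOn
    have s2 : ∫ x in A, (c * (φcen x * p₀ x) - c * (φ x * p₀ x)) ∂μ
        = (∫ x in A, c * (φcen x * p₀ x) ∂μ) - ∫ x in A, c * (φ x * p₀ x) ∂μ :=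
      integral_sub (hiφcenp₀.integrableOn.const_mul c) (hiφp₀.integrableOn.const_mul c)
    have s3 : ∫ x in A, ((φcen x * p₁ x - φ x * p₁ x)
            - (c * (φcen x * p₀ x) - c * (φ x * p₀ x))) ∂μ
        = (∫ x in A, (φcen x * p₁ x - φ x * p₁ x) ∂μ)
          - ∫ x in A, (c * (φcen x * p₀ x) - c * (φ x * p₀ x)) ∂μ :=
      integral_sub (hiφcenp₁.integrableOn.sub hiφp₁.integrableOn)
        ((hiφcenp₀.integrableOn.const_mul c).sub (hiφp₀.integrableOn.const_mul c))
    have s4 : ∫ x in A, c * (φcen x * p₀ x) ∂μ = c * ∫ x in A, φcen x * p₀ x ∂μ :=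
      integral_const_mul c _
    have s5 : ∫ x in A, c * (φ x * p₀ x) ∂μ = c * ∫ x in A, φ x * p₀ x ∂μ :=
      integral_const_mul c _
    rw [h1, s3, s1, s2, s4, s5]
  -- NP inequality on the complement value
  have hNPc : 0 ≤ (t - β) * (P1c - c * P0c) := by
    rw [ht]
    exact sign_aux c γ hc P0c P1c β hP0c_pos.le hP1c_pos.le hβ0 hβ1
  -- assemble
  have lhs : ∫ x, φ x * q x ∂μ = (∫ x in A, φ x * p₁ x ∂μ) + β * P1c := by
    rw [← integral_add_compl hA hiφq, hqp₁, hβP]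
  have rhs : ∫ x, φcen x * q x ∂μ = (∫ x in A, φcen x * p₁ x ∂μ) + t * P1c := by
    rw [← integral_add_compl hA hiφcenq, hqp₁']
    congr 1
    rw [← hqcompl, ← integral_const_mul]
    exact setIntegral_congr_fun hA.compl fun x (hx : x ∈ Aᶜ) => by
      rw [hφcen_compl x hx]
  rw [lhs, rhs]
  nlinarith [hNPA, hexp, hNPc, hsize, hlev', mul_nonneg hc (sub_nonneg.mpr hlev')]


end
end

section
/- Let (X, F, μ) be a σ-finite measure space, A ∈ F with 0 < μ(A^c) < ∞, let p_0, p_1 be probability densities with 0 < P_0(A) < 1 and 0 < P_1(A) < 1 (P_j(A) = ∫_A p_j dμ, P_j(A^c) = 1 − P_j(A)), let n ≥ 1 and α ∈ (0,1). Define the censored log-likelihood ratio statistic T(x_1,…,x_n) = Σ_{k=1}^n [1_A(x_k)·log(p_1(x_k)/p_0(x_k)) + 1_{A^c}(x_k)·log(P_1(A^c)/P_0(A^c))], and let φ_cen : X^n → [0,1] be a test of the form φ_cen = 1 on {T > c}, γ on {T = c}, 0 on {T < c}, for some c ∈ ℝ and γ ∈ [0,1], whose size equals α under every null density: ∫_{X^n}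 φ_cen·∏_{k=1}^n p(x_k) dμ^{⊗n} = α for all densities p with p·1_A = p_0·1_A μ-a.e. Define the minimal power ρ(φ) = inf over densities q with q·1_A = p_1·1_A μ-a.e. of ∫_{X^n} φ·∏_{k=1}^n q(x_k) dμ^{⊗n}. Then for every measurable test φ : X^n → [0,1] of level α (i.e. ∫_{X^n} φ·∏_k p(x_k) dμ^{⊗n} ≤ α for all densities p with p·1_A = p_0·1_A μ-a.e.), one has ρ(φ_cen) ≥ ρ(φ); i.e. φ_cen is a minimax test. -/
open MeasureTheory
open scoped Classical ENNReal

noncomputable section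

/-- The censored log-likelihood ratio statistic
`T(x₁,…,xₙ) = Σ_k [1_A(x_k)·log(p₁(x_k)/p₀(x_k)) + 1_{Aᶜ}(x_k)·log(P₁(Aᶜ)/P₀(Aᶜ))]`,
with values in the extended reals (ratios computed in `ℝ≥0∞`). -/
def censoredLLR {X : Type*} [MeasurableSpace X] (μ : Measure X) (A : Set X)
    (p₀ p₁ : X → ℝ) {n : ℕ} (x : Fin n → X) : EReal :=
  ∑ k : Fin n,
    (if x k ∈ A then ENNReal.log (ENNReal.ofReal (p₁ (x k)) / ENNReal.ofReal (p₀ (x k)))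
     else ENNReal.log (ENNReal.ofReal (1 - ∫ z in A, p₁ z ∂μ)
        / ENNReal.ofReal (1 - ∫ z in A, p₀ z ∂μ)))

/-- The minimal power of a test `φ` over the composite alternative
`{q : q·1_A = p₁·1_A μ-a.e.}`. -/
def minimalPower {X : Type*} [MeasurableSpace X] (μ : Measure X) (A : Set X)
    (p₁ : X → ℝ) (n : ℕ) (φ : (Fin n → X) → ℝ) : ℝ :=
  ⨅ q : {q : X → ℝ // IsDensity μ q ∧ ∀ᵐ x ∂μ, x ∈ A → q x = p₁ x},
    ∫ x, φ x * ∏ k, (q : X → ℝ) (x k) ∂(Measure.pi fun _ : Fin n => μ)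

/-!
Let `p*` be the density that agrees with `p` on `A` and spreads the mass `P(Aᶜ)` uniformly over
`Aᶜ`. The likelihood ratio `p₁*/p₀*` is exactly the censored ratio, so `φ_cen` is the
Neyman–Pearson test of `p₀*` against `p₁*` and no level-`α` test is more powerful at `p₁*`.
On the other hand `φ_cen` sees an observation only through the censored ratio, which is constant
on `Aᶜ`; under an alternative `q` the law of that ratio is fixed by `q` on `A` and by
`q(Aᶜ) = P₁(Aᶜ)`, so `φ_cen` has the same power at every alternative.
-/

open Set Filter

theorem ENNReal.log_prod {ι : Type*} (s : Finset ι) (f : ι → ℝ≥0∞) :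
    ENNReal.log (∏ i ∈ s, f i) = ∑ i ∈ s, ENNReal.log (f i) := by
  induction s using Finset.cons_induction with
  | empty => simp
  | cons a s ha ih => rw [Finset.prod_cons, Finset.sum_cons, ENNReal.log_mul_add, ih]

lemma ENNReal.coe_lt_log_ofReal_div_iff (c : ℝ) {P Q : ℝ} (hP : 0 ≤ P) :
    (c : EReal) < ENNReal.log (ENNReal.ofReal Q / ENNReal.ofReal P) ↔ Real.exp c * P < Q := by
  rw [← EReal.exp_lt_exp_iff, ENNReal.exp_log, EReal.exp_coe,
    ENNReal.lt_div_iff_mul_lt (Or.inr ENNReal.ofReal_ne_top) (Or.inl ENNReal.ofReal_ne_top),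
    ← ENNReal.ofReal_mul (Real.exp_pos c).le,
    ENNReal.ofReal_lt_ofReal_iff_of_nonneg (mul_nonneg (Real.exp_pos c).le hP)]

lemma ENNReal.log_ofReal_div_lt_coe_of_lt (c : ℝ) {P Q : ℝ} (hQ : 0 ≤ Q)
    (h : Q < Real.exp c * P) : ENNReal.log (ENNReal.ofReal Q / ENNReal.ofReal P) < c := by
  have hP : 0 < P := pos_of_mul_pos_right (hQ.trans_lt h) (Real.exp_pos c).le
  rw [← EReal.exp_lt_exp_iff, ENNReal.exp_log, EReal.exp_coe,
    ENNReal.div_lt_iff (Or.inl (ENNReal.ofReal_pos.2 hP).ne') (Or.inl ENNReal.ofReal_ne_top),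
    ← ENNReal.ofReal_mul (Real.exp_pos c).le, ENNReal.ofReal_lt_ofReal_iff_of_nonneg hQ]
  exact h

namespace IsDensity

variable {X : Type*} [MeasurableSpace X] {μ : Measure X} {p q : X → ℝ}

lemma integrable (hp : IsDensity μ p) : Integrable p μ := by
  by_contra h
  simpa [integral_undef h] using hp.2.2

lemma setIntegral_le_one (hp : IsDensity μ p) (A : Set X) : ∫ x in A, p x ∂μ ≤ 1 :=
  hp.2.2 ▸ setIntegral_le_integral hp.integrable (Eventually.of_forall hp.2.1)

lemma isProbabilityMeasure_withDensity (hp : IsDensity μ p) :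
    IsProbabilityMeasure (μ.withDensity fun x => ENNReal.ofReal (p x)) := by
  constructor
  rw [withDensity_apply _ MeasurableSet.univ, Measure.restrict_univ,
    ← ofReal_integral_eq_lintegral_ofReal hp.integrable (Eventually.of_forall hp.2.1), hp.2.2,
    ENNReal.ofReal_one]

lemma setLIntegral_compl_eq {A : Set X} (hA : MeasurableSet A) (hq : IsDensity μ q)
    (hqp : ∀ᵐ x ∂μ, x ∈ A → q x = p x) :
    ∫⁻ x in Aᶜ, ENNReal.ofReal (q x) ∂μ = ENNReal.ofReal (1 - ∫ x in A, p x ∂μ) := by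
  rw [← ofReal_integral_eq_lintegral_ofReal hq.integrable.integrableOn
      (Eventually.of_forall hq.2.1), ← setIntegral_congr_ae hA hqp, ← hq.2.2,
    ← integral_add_compl hA hq.integrable, add_sub_cancel_left]

end IsDensity

section Product

variable {ι X : Type*} [Fintype ι] [MeasurableSpace X] {μ : Measure X}

def testPower (μ : Measure X) (φ : (ι → X) → ℝ) (q : X → ℝ) : ℝ :=
  ∫ x, φ x * ∏ i, q (x i) ∂Measure.pi fun _ => μ

variable {q : X → ℝ}

lemma testPower_nonneg {φ : (ι → X) → ℝ} (hφ : ∀ x, 0 ≤ φ x) (hq : ∀ x, 0 ≤ q x) :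
    0 ≤ testPower μ φ q :=
  integral_nonneg fun x => mul_nonneg (hφ x) (Finset.prod_nonneg fun _ _ => hq _)

variable [SigmaFinite μ]

lemma IsDensity.pi_withDensity (hq : IsDensity μ q) :
    Measure.pi (fun _ : ι => μ.withDensity fun y => ENNReal.ofReal (q y)) =
      (Measure.pi fun _ : ι => μ).withDensity fun x => ENNReal.ofReal (∏ i, q (x i)) := by
  have := hq.isProbabilityMeasure_withDensity
  refine Measure.pi_eq (μ := fun _ : ι => μ.withDensity fun y => ENNReal.ofReal (q y))
    fun s hs => ?_
  rw [withDensity_apply _ (MeasurableSet.univ_pi hs), Measure.restrict_pi_pi,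
    ← ofReal_integral_eq_lintegral_ofReal
      (Integrable.fintype_prod fun i => hq.integrable.integrableOn)
      (Eventually.of_forall fun x => Finset.prod_nonneg fun i _ => hq.2.1 _),
    integral_fintype_prod_eq_prod (fun _ => q),
    ENNReal.ofReal_prod_of_nonneg fun i _ => integral_nonneg fun x => hq.2.1 x]
  refine Finset.prod_congr rfl fun i _ => ?_
  rw [withDensity_apply _ (hs i), ofReal_integral_eq_lintegral_ofReal
    hq.integrable.integrableOn (Eventually.of_forall hq.2.1)]

lemma IsDensity.testPower_eq_integral (hq : IsDensity μ q) (φ : (ι → X) → ℝ) :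
    testPower μ φ q =
      ∫ x, φ x ∂Measure.pi fun _ => μ.withDensity fun y => ENNReal.ofReal (q y) := by
  rw [testPower, hq.pi_withDensity, integral_withDensity_eq_integral_toReal_smul
    (by have := hq.1; fun_prop) (Eventually.of_forall fun _ => ENNReal.ofReal_lt_top)]
  refine integral_congr_ae (Eventually.of_forall fun x => ?_)
  simp only [ENNReal.toReal_ofReal (Finset.prod_nonneg fun i _ => hq.2.1 (x i)), smul_eq_mul,
    mul_comm]

lemma IsDensity.integrable_mul_prod (hq : IsDensity μ q) {φ : (ι → X) → ℝ}
    (hφ : Measurable φ) {C : ℝ} (hC : ∀ x, |φ x| ≤ C) :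
    Integrable (fun x => φ x * ∏ i, q (x i)) (Measure.pi fun _ => μ) :=
  (Integrable.fintype_prod fun _ => hq.integrable).bdd_mul hφ.aestronglyMeasurable
    (Eventually.of_forall hC)

end Product

section Pushforward

variable {X β : Type*} [MeasurableSpace X] [MeasurableSpace β] {μ : Measure X} {A : Set X}
  {r : X → β} {b : β}

lemma map_withDensity_eq_of_eqOn_compl (hA : MeasurableSet A) (hr : Measurable r)
    (hrA : ∀ x ∉ A, r x = b) {f g : X → ℝ≥0∞} (hfg : f =ᵐ[μ.restrict A] g)
    (hmass : ∫⁻ x in Aᶜ, f x ∂μ = ∫⁻ x in Aᶜ, g x ∂μ) :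
    (μ.withDensity f).map r = (μ.withDensity g).map r := by
  have hsplit : ∀ h : X → ℝ≥0∞, (μ.withDensity h).map r =
      ((μ.restrict A).withDensity h).map r + (∫⁻ x in Aᶜ, h x ∂μ) • Measure.dirac b := by
    intro h
    have hconst : r =ᵐ[(μ.restrict Aᶜ).withDensity h] fun _ => b :=
      (withDensity_absolutelyContinuous _ _).ae_le (ae_restrict_of_forall_mem hA.compl hrA)
    rw [← Measure.restrict_add_restrict_compl (μ := μ.withDensity h) hA, Measure.map_add _ _ hr,
      restrict_withDensity hA, restrict_withDensity hA.compl, Measure.map_congr hconst,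
      Measure.map_const, withDensity_apply _ MeasurableSet.univ, Measure.restrict_univ]
  rw [hsplit f, hsplit g, withDensity_congr_ae hfg, hmass]

lemma integral_comp_pi_eq_of_map_eq {ι : Type*} [Fintype ι] (hr : Measurable r)
    {ν ν' : Measure X} [IsFiniteMeasure ν] [IsFiniteMeasure ν'] (h : ν.map r = ν'.map r)
    {F : (ι → β) → ℝ} (hF : Measurable F) :
    ∫ x, F (fun i => r (x i)) ∂Measure.pi (fun _ => ν) =
      ∫ x, F (fun i => r (x i)) ∂Measure.pi (fun _ => ν') := by
  have hpush : ∀ (ν : Measure X) [IsFiniteMeasure ν], ∫ x, F (fun i => r (x i)) ∂Measure.pi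
      (fun _ => ν) = ∫ u, F u ∂Measure.pi (fun _ : ι => ν.map r) := by
    intro ν _
    rw [← Measure.pi_map_pi fun _ => hr.aemeasurable, integral_map
      (by fun_prop : Measurable fun (x : ι → X) i => r (x i)).aemeasurable hF.aestronglyMeasurable]
  rw [hpush ν, hpush ν', h]

variable {ι : Type*} [Fintype ι] [SigmaFinite μ] {q q' : X → ℝ}

lemma IsDensity.testPower_comp_eq_of_ae_eq_on (hA : MeasurableSet A) (hr : Measurable r)
    (hrA : ∀ x ∉ A, r x = b) {F : (ι → β) → ℝ} (hF : Measurable F) (hq : IsDensity μ q)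
    (hq' : IsDensity μ q') (hqq' : ∀ᵐ x ∂μ, x ∈ A → q x = q' x) :
    testPower μ (fun x => F (fun i => r (x i))) q =
      testPower μ (fun x => F (fun i => r (x i))) q' := by
  have := hq.isProbabilityMeasure_withDensity
  have := hq'.isProbabilityMeasure_withDensity
  rw [hq.testPower_eq_integral, hq'.testPower_eq_integral]
  refine integral_comp_pi_eq_of_map_eq hr (map_withDensity_eq_of_eqOn_compl hA hr hrA ?_ ?_) hF
  · exact (ae_restrict_iff' hA).2 (hqq'.mono fun x h hx => by simp only [h hx])
  · rw [hq.setLIntegral_compl_eq hA hqq',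
      hq'.setLIntegral_compl_eq hA (Eventually.of_forall fun _ _ => rfl)]

end Pushforward

lemma integral_mul_le_integral_mul_of_neymanPearson {Ω : Type*} [MeasurableSpace Ω]
    {m : Measure Ω} {P Q φ ψ : Ω → ℝ} {k : ℝ} (hk : 0 ≤ k)
    (hφP : Integrable (fun x => φ x * P x) m) (hφQ : Integrable (fun x => φ x * Q x) m)
    (hψP : Integrable (fun x => ψ x * P x) m) (hψQ : Integrable (fun x => ψ x * Q x) m)
    (hNP : ∀ x, 0 ≤ (ψ x - φ x) * (Q x - k * P x))
    (hsize : ∫ x, φ x * P x ∂m ≤ ∫ x, ψ x * P x ∂m) :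
    ∫ x, φ x * Q x ∂m ≤ ∫ x, ψ x * Q x ∂m := by
  have h : 0 ≤ ∫ x, (ψ x * Q x - φ x * Q x) - k * (ψ x * P x - φ x * P x) ∂m :=
    integral_nonneg fun x => (hNP x).trans_eq (by ring)
  rw [integral_sub (f := fun x => ψ x * Q x - φ x * Q x)
      (g := fun x => k * (ψ x * P x - φ x * P x)) (hψQ.sub hφQ) ((hψP.sub hφP).const_mul k),
    integral_const_mul,
    integral_sub hψQ hφQ, integral_sub hψP hφP] at h
  nlinarith [mul_le_mul_of_nonneg_left hsize hk]

def thresholdTest (c γ : ℝ) (u : ℝ≥0∞) : ℝ :=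
  if (c : EReal) < ENNReal.log u then 1 else if ENNReal.log u = c then γ else 0

lemma measurable_thresholdTest (c γ : ℝ) : Measurable (thresholdTest c γ) :=
  Measurable.ite (ENNReal.measurable_log measurableSet_Ioi) measurable_const
    (Measurable.ite (ENNReal.measurable_log (measurableSet_singleton _)) measurable_const
      measurable_const)

lemma abs_thresholdTest_le (c γ : ℝ) (u : ℝ≥0∞) : |thresholdTest c γ u| ≤ max 1 |γ| := by
  unfold thresholdTest
  split_ifs <;> simp

lemma thresholdTest_neymanPearson {c γ φ P Q : ℝ} (hφ : φ ∈ Icc 0 1) (hP : 0 ≤ P)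
    (hQ : 0 ≤ Q) :
    0 ≤ (thresholdTest c γ (ENNReal.ofReal Q / ENNReal.ofReal P) - φ) * (Q - Real.exp c * P) := by
  rcases lt_trichotomy (Real.exp c * P) Q with h | h | h
  · rw [thresholdTest, if_pos ((ENNReal.coe_lt_log_ofReal_div_iff c hP).2 h)]
    exact mul_nonneg (by linarith [hφ.2]) (by linarith)
  · simp [h]
  · have hlt := ENNReal.log_ofReal_div_lt_coe_of_lt c hQ h
    rw [thresholdTest, if_neg (lt_asymm hlt), if_neg hlt.ne]
    nlinarith [hφ.1]

section LikelihoodRatio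

variable {X : Type*}

/-- Valued in `ℝ≥0∞`: it is `∞` where only `p` vanishes and `0` where both do. -/
def likelihoodRatio (p q : X → ℝ) (x : X) : ℝ≥0∞ :=
  ENNReal.ofReal (q x) / ENNReal.ofReal (p x)

lemma prod_likelihoodRatio {ι : Type*} [Fintype ι] {p q : X → ℝ} (hp : ∀ x, 0 ≤ p x)
    (hq : ∀ x, 0 ≤ q x) (x : ι → X) :
    ∏ i, likelihoodRatio p q (x i) =
      ENNReal.ofReal (∏ i, q (x i)) / ENNReal.ofReal (∏ i, p (x i)) := by
  simp only [likelihoodRatio]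
  rw [ENNReal.prod_div_distrib_of_ne_top fun i _ => ENNReal.ofReal_ne_top,
    ENNReal.ofReal_prod_of_nonneg fun i _ => hq _, ENNReal.ofReal_prod_of_nonneg fun i _ => hp _]

variable [MeasurableSpace X] {μ : Measure X}

lemma measurable_likelihoodRatio {p q : X → ℝ} (hp : Measurable p) (hq : Measurable q) :
    Measurable (likelihoodRatio p q) :=
  hq.ennreal_ofReal.div hp.ennreal_ofReal

lemma IsDensity.testPower_le_thresholdTest {ι : Type*} [Fintype ι] [SigmaFinite μ]
    {P Q : X → ℝ} (hP : IsDensity μ P) (hQ : IsDensity μ Q) (c γ : ℝ) {φ : (ι → X) → ℝ}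
    (hφ : Measurable φ) (hφ01 : ∀ x, φ x ∈ Icc (0 : ℝ) 1)
    (hlevel : testPower μ φ P ≤
      testPower μ (fun x : ι → X => thresholdTest c γ (∏ i, likelihoodRatio P Q (x i))) P) :
    testPower μ φ Q ≤
      testPower μ (fun x : ι → X => thresholdTest c γ (∏ i, likelihoodRatio P Q (x i))) Q := by
  have hψ : Measurable fun x : ι → X => thresholdTest c γ (∏ i, likelihoodRatio P Q (x i)) :=
    (measurable_thresholdTest c γ).comp
      (Finset.measurable_prod _ fun i _ => (measurable_likelihoodRatio hP.1 hQ.1).comp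
        (measurable_pi_apply i))
  have hφ1 : ∀ x, |φ x| ≤ 1 := fun x => abs_le.2 ⟨by linarith [(hφ01 x).1], (hφ01 x).2⟩
  refine integral_mul_le_integral_mul_of_neymanPearson (Real.exp_pos c).le
    (hP.integrable_mul_prod hφ hφ1) (hQ.integrable_mul_prod hφ hφ1)
    (hP.integrable_mul_prod hψ fun _ => abs_thresholdTest_le c γ _)
    (hQ.integrable_mul_prod hψ fun _ => abs_thresholdTest_le c γ _) (fun x => ?_) hlevel
  rw [prod_likelihoodRatio hP.2.1 hQ.2.1]
  exact thresholdTest_neymanPearson (hφ01 x) (Finset.prod_nonneg fun i _ => hP.2.1 _)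
    (Finset.prod_nonneg fun i _ => hQ.2.1 _)

end LikelihoodRatio

section LeastFavorable

variable {X : Type*} [MeasurableSpace X] {μ : Measure X} {A : Set X} {p : X → ℝ}

def leastFavorable (μ : Measure X) (A : Set X) (p : X → ℝ) : X → ℝ :=
  A.piecewise p fun _ => (1 - ∫ x in A, p x ∂μ) / μ.real Aᶜ

lemma leastFavorable_of_mem {x : X} (hx : x ∈ A) : leastFavorable μ A p x = p x :=
  A.piecewise_eq_of_mem _ _ hx

lemma leastFavorable_of_notMem {x : X} (hx : x ∉ A) :
    leastFavorable μ A p x = (1 - ∫ x in A, p x ∂μ) / μ.real Aᶜ :=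
  A.piecewise_eq_of_notMem _ _ hx

lemma ae_leastFavorable_eq (μ : Measure X) (A : Set X) (p : X → ℝ) :
    ∀ᵐ x ∂μ, x ∈ A → leastFavorable μ A p x = p x :=
  Eventually.of_forall fun _ => leastFavorable_of_mem

lemma isDensity_leastFavorable (hA : MeasurableSet A) (hAc : 0 < μ.real Aᶜ)
    (hp : IsDensity μ p) : IsDensity μ (leastFavorable μ A p) := by
  have hconst : 0 ≤ (1 - ∫ x in A, p x ∂μ) / μ.real Aᶜ :=
    div_nonneg (sub_nonneg.2 (hp.setIntegral_le_one A)) hAc.le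
  refine ⟨hp.1.piecewise hA measurable_const, fun x => ?_, ?_⟩
  · by_cases hx : x ∈ A
    · exact (leastFavorable_of_mem hx).trans_ge (hp.2.1 x)
    · exact (leastFavorable_of_notMem hx).trans_ge hconst
  · have hint : Integrable (leastFavorable μ A p) μ :=
      Integrable.piecewise hA hp.integrable.integrableOn
        (integrableOn_const (ENNReal.toReal_pos_iff.1 hAc).2.ne)
    rw [← integral_add_compl hA hint,
      setIntegral_congr_fun hA fun x hx => leastFavorable_of_mem hx,
      setIntegral_congr_fun hA.compl fun x hx => leastFavorable_of_notMem hx,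
      setIntegral_const, smul_eq_mul, mul_div_cancel₀ _ hAc.ne', add_sub_cancel]

lemma likelihoodRatio_leastFavorable_of_notMem {p₀ p₁ : X → ℝ} {x : X} (hx : x ∉ A) :
    likelihoodRatio (leastFavorable μ A p₀) (leastFavorable μ A p₁) x =
      ENNReal.ofReal ((1 - ∫ x in A, p₁ x ∂μ) / μ.real Aᶜ) /
        ENNReal.ofReal ((1 - ∫ x in A, p₀ x ∂μ) / μ.real Aᶜ) := by
  rw [likelihoodRatio, leastFavorable_of_notMem hx, leastFavorable_of_notMem hx]

lemma censoredLLR_eq_log_prod_likelihoodRatio (hAc : 0 < μ.real Aᶜ) (p₀ p₁ : X → ℝ) {n : ℕ}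
    (x : Fin n → X) :
    censoredLLR μ A p₀ p₁ x = ENNReal.log
      (∏ k, likelihoodRatio (leastFavorable μ A p₀) (leastFavorable μ A p₁) (x k)) := by
  rw [ENNReal.log_prod]
  refine Finset.sum_congr rfl fun k _ => ?_
  by_cases hk : x k ∈ A
  · rw [if_pos hk, likelihoodRatio, leastFavorable_of_mem hk, leastFavorable_of_mem hk]
  · set M := ENNReal.ofReal (μ.real Aᶜ)
    have hcancel : ∀ a b : ℝ≥0∞, a / M / (b / M) = a / b := fun a b => by
      rw [div_eq_mul_inv a, div_eq_mul_inv b, ENNReal.mul_div_mul_right _ _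
        (ENNReal.inv_ne_zero.2 ENNReal.ofReal_ne_top)
        (ENNReal.inv_ne_top.2 (ENNReal.ofReal_pos.2 hAc).ne')]
    rw [if_neg hk, likelihoodRatio_leastFavorable_of_notMem hk, ENNReal.ofReal_div_of_pos hAc,
      ENNReal.ofReal_div_of_pos hAc, hcancel]

end LeastFavorable

section MinimalPower

variable {X : Type*} [MeasurableSpace X] {μ : Measure X} {A : Set X} {p₁ : X → ℝ} {n : ℕ}
  {φ : (Fin n → X) → ℝ}

lemma minimalPower_le (hφ : ∀ x, 0 ≤ φ x) {q : X → ℝ} (hq : IsDensity μ q)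
    (hqA : ∀ᵐ x ∂μ, x ∈ A → q x = p₁ x) : minimalPower μ A p₁ n φ ≤ testPower μ φ q := by
  refine ciInf_le ⟨0, ?_⟩
    (⟨q, hq, hqA⟩ : {q : X → ℝ // IsDensity μ q ∧ ∀ᵐ x ∂μ, x ∈ A → q x = p₁ x})
  rintro _ ⟨q, rfl⟩
  exact testPower_nonneg hφ q.2.1.2.1

lemma le_minimalPower {a : ℝ} (hne : ∃ q, IsDensity μ q ∧ ∀ᵐ x ∂μ, x ∈ A → q x = p₁ x)
    (h : ∀ q, IsDensity μ q → (∀ᵐ x ∂μ, x ∈ A → q x = p₁ x) → a ≤ testPower μ φ q) :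
    a ≤ minimalPower μ A p₁ n φ :=
  have := nonempty_subtype.2 hne
  le_ciInf fun q => h q q.2.1 q.2.2

end MinimalPower

theorem censored_LLR_test_minimax_general
    {X : Type*} [MeasurableSpace X] (μ : Measure X) [SigmaFinite μ]
    (A : Set X) (hA : MeasurableSet A) (hAc0 : 0 < μ Aᶜ) (hAcfin : μ Aᶜ < ⊤)
    (p₀ p₁ : X → ℝ) (hp₀ : IsDensity μ p₀) (hp₁ : IsDensity μ p₁)
    (n : ℕ)
    (α : ℝ)
    (c : ℝ) (γ : ℝ)
    (φcen : (Fin n → X) → ℝ)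
    -- `φ_cen` is the threshold test at `c` with randomization `γ`:
    (hform : ∀ x, φcen x =
      if (c : EReal) < censoredLLR μ A p₀ p₁ x then 1
      else if censoredLLR μ A p₀ p₁ x = (c : EReal) then γ else 0)
    -- `φ_cen` has size exactly `α` under every null density:
    (hsize : ∀ p : X → ℝ, IsDensity μ p → (∀ᵐ x ∂μ, x ∈ A → p x = p₀ x) →
      ∫ x, φcen x * ∏ k, p (x k) ∂(Measure.pi fun _ : Fin n => μ) = α) :
    -- minimax optimality:
    ∀ φ : (Fin n → X) → ℝ, Measurable φ → (∀ x, φ x ∈ Set.Icc (0 : ℝ) 1) →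
      (∀ p : X → ℝ, IsDensity μ p → (∀ᵐ x ∂μ, x ∈ A → p x = p₀ x) →
        ∫ x, φ x * ∏ k, p (x k) ∂(Measure.pi fun _ : Fin n => μ) ≤ α) →
      minimalPower μ A p₁ n φ ≤ minimalPower μ A p₁ n φcen := by
  intro φ hφ hφ01 hlevel
  have hAc : 0 < μ.real Aᶜ := ENNReal.toReal_pos hAc0.ne' hAcfin.ne
  set p₀' := leastFavorable μ A p₀
  set p₁' := leastFavorable μ A p₁
  have hp₀' : IsDensity μ p₀' := isDensity_leastFavorable hA hAc hp₀
  have hp₁' : IsDensity μ p₁' := isDensity_leastFavorable hA hAc hp₁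
  have hφcen : φcen = fun x => thresholdTest c γ (∏ k, likelihoodRatio p₀' p₁' (x k)) :=
    funext fun x => by rw [hform, censoredLLR_eq_log_prod_likelihoodRatio hAc]; rfl
  have hpower (q : X → ℝ) (hq : IsDensity μ q) (hqA : ∀ᵐ x ∂μ, x ∈ A → q x = p₁ x) :
      testPower μ φcen q = testPower μ φcen p₁' := by
    rw [hφcen]
    exact hq.testPower_comp_eq_of_ae_eq_on (F := fun u => thresholdTest c γ (∏ k, u k)) hA
      (measurable_likelihoodRatio hp₀'.1 hp₁'.1)
      (fun x hx => likelihoodRatio_leastFavorable_of_notMem hx)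
      ((measurable_thresholdTest c γ).comp (by fun_prop)) hp₁'
      (hqA.mono fun x h hx => (h hx).trans (leastFavorable_of_mem hx).symm)
  have hNP : testPower μ φ p₁' ≤ testPower μ φcen p₁' := by
    have h := (hlevel _ hp₀' (ae_leastFavorable_eq μ A p₀)).trans
      (hsize _ hp₀' (ae_leastFavorable_eq μ A p₀)).ge
    rw [hφcen] at h ⊢
    exact hp₀'.testPower_le_thresholdTest hp₁' c γ hφ hφ01 h
  calc minimalPower μ A p₁ n φ ≤ testPower μ φ p₁' :=
        minimalPower_le (fun x => (hφ01 x).1) hp₁' (ae_leastFavorable_eq μ A p₁)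
    _ ≤ testPower μ φcen p₁' := hNP
    _ ≤ minimalPower μ A p₁ n φcen :=
        le_minimalPower ⟨p₁', hp₁', ae_leastFavorable_eq μ A p₁⟩ fun q hq hqA =>
          (hpower q hq hqA).ge

/-- The test based on thresholding the censored log-likelihood ratio
statistic, with size exactly `α` under every null density, is a minimax test: it maximizes
the minimal power over the composite alternative among all level-`α` tests. -/
theorem censored_LLR_test_minimax
    {X : Type*} [MeasurableSpace X] (μ : Measure X) [SigmaFinite μ]
    (A : Set X) (hA : MeasurableSet A) (hAc0 : 0 < μ Aᶜ) (hAcfin : μ Aᶜ < ⊤)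
    (p₀ p₁ : X → ℝ) (hp₀ : IsDensity μ p₀) (hp₁ : IsDensity μ p₁)
    (hP₀A : (∫ z in A, p₀ z ∂μ) ∈ Set.Ioo (0 : ℝ) 1)
    (hP₁A : (∫ z in A, p₁ z ∂μ) ∈ Set.Ioo (0 : ℝ) 1)
    (n : ℕ) (hn : 1 ≤ n)
    (α : ℝ) (hα : α ∈ Set.Ioo (0 : ℝ) 1)
    (c : ℝ) (γ : ℝ) (hγ : γ ∈ Set.Icc (0 : ℝ) 1)
    (φcen : (Fin n → X) → ℝ)
    -- `φ_cen` is the threshold test at `c` with randomization `γ`: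
    (hform : ∀ x, φcen x =
      if (c : EReal) < censoredLLR μ A p₀ p₁ x then 1
      else if censoredLLR μ A p₀ p₁ x = (c : EReal) then γ else 0)
    -- `φ_cen` has size exactly `α` under every null density:
    (hsize : ∀ p : X → ℝ, IsDensity μ p → (∀ᵐ x ∂μ, x ∈ A → p x = p₀ x) →
      ∫ x, φcen x * ∏ k, p (x k) ∂(Measure.pi fun _ : Fin n => μ) = α) :
    -- minimax optimality:
    ∀ φ : (Fin n → X) → ℝ, Measurable φ → (∀ x, φ x ∈ Set.Icc (0 : ℝ) 1) →
      (∀ p : X → ℝ, IsDensity μ p → (∀ᵐ x ∂μ, x ∈ A → p x = p₀ x) →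
        ∫ x, φ x * ∏ k, p (x k) ∂(Measure.pi fun _ : Fin n => μ) ≤ α) →
      minimalPower μ A p₁ n φ ≤ minimalPower μ A p₁ n φcen :=
  censored_LLR_test_minimax_general μ A hA hAc0 hAcfin p₀ p₁ hp₀ hp₁ n α c γ φcen hform hsize
end
end
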